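/- arXiv:1907.00337 — 6 statements merged into one kernel-verified Lean document; each statement's English description precedes it below -/
import Mathlib

section
/- Let H be a real Hilbert space, k ≥ 1 and m ≥ 1 integers, M an m-dimensional C^k-submanifold of H, h₀ ∈ M, and L ⊆ H a finite-dimensional linear subspace such that L ⊆ T_h M for all h ∈ U ∩ M, for some open neighborhood U ⊆ H of h₀. Write h₀ = h₁ + h₂ with h₁ ∈ L^⊥ and h₂ ∈ L. Then there exist open neighborhoods U₁ ⊆ L^⊥ of h₁ and U₂ ⊆ L of h₂ such that U₀ := U₁ + U₂ is an open neighborhood of h₀ in H satisfying U₀ ∩ M = U₀ ∩ ((U₀ ∩ M) + L). -/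
open Set Pointwise

noncomputable section

/-- `φ : V → U ∩ M` is a parametrization of class `C^k` of `M` around `h₀`:
`U` is an open neighborhood of `h₀`, `V` is open, `φ ∈ C^k(V;H)`,
`φ : V → U ∩ M` is a homeomorphism, and `Dφ(y)` is injective for all `y ∈ V`. -/
structure IsParametrization {E H : Type*} [NormedAddCommGroup E] [NormedSpace ℝ E]
    [NormedAddCommGroup H] [NormedSpace ℝ H] (k : ℕ) (M : Set H) (h₀ : H)
    (V : Set E) (φ : E → H) (U : Set H) : Prop where
  isOpen_U : IsOpen U
  h₀_mem_U : h₀ ∈ U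
  isOpen_V : IsOpen V
  contDiffOn : ContDiffOn ℝ k φ V
  image_eq : φ '' V = U ∩ M
  injOn : Set.InjOn φ V
  exists_contInv : ∃ ψ : H → E, ContinuousOn ψ (U ∩ M) ∧ ∀ y ∈ V, ψ (φ y) = y
  fderiv_injective : ∀ y ∈ V, Function.Injective (fderiv ℝ φ y)

/-- `M` is an `m`-dimensional `C^k`-submanifold of `H`: `M` is nonempty and every
point of `M` admits a parametrization with domain an open subset of `ℝ^m`. -/
def IsSubmanifold {H : Type*} [NormedAddCommGroup H] [NormedSpace ℝ H]
    (k m : ℕ) (M : Set H) : Prop :=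
  M.Nonempty ∧ ∀ h₀ ∈ M, ∃ (V : Set (EuclideanSpace ℝ (Fin m)))
    (φ : EuclideanSpace ℝ (Fin m) → H) (U : Set H), IsParametrization k M h₀ V φ U

/-- The tangent space `T_h M`: the image of `Dφ(φ⁻¹(h))` for a parametrization `φ`
of `M` around `h`. -/
def TangentSet {H : Type*} [NormedAddCommGroup H] [NormedSpace ℝ H]
    (k m : ℕ) (M : Set H) (h : H) : Set H :=
  {v | ∃ (V : Set (EuclideanSpace ℝ (Fin m))) (φ : EuclideanSpace ℝ (Fin m) → H)
    (U : Set H), IsParametrization k M h V φ U ∧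
      ∃ y ∈ V, φ y = h ∧ v ∈ Set.range (fderiv ℝ φ y)}

/-- `M` has flatness at least `d` at `h₀`: some `d`-dimensional subspace `L ⊆ H` is
contained in all tangent spaces `T_h M` for `h ∈ U ∩ M`, `U` an open neighborhood of `h₀`. -/
def FlatAt {H : Type*} [NormedAddCommGroup H] [NormedSpace ℝ H]
    (k m : ℕ) (M : Set H) (h₀ : H) (d : ℕ) : Prop :=
  ∃ (L : Submodule ℝ H) (U : Set H), Module.finrank ℝ L = d ∧ IsOpen U ∧ h₀ ∈ U ∧
    ∀ h ∈ U ∩ M, (L : Set H) ⊆ TangentSet k m M h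

/-- The flatness `fl M(h₀)` of `M` at `h₀`: the largest `d ∈ {0,…,m}` such that `M` has
flatness at least `d` at `h₀`. -/
def flatnessAt {H : Type*} [NormedAddCommGroup H] [NormedSpace ℝ H]
    (k m : ℕ) (M : Set H) (h₀ : H) : ℕ :=
  sSup {d | d ≤ m ∧ FlatAt k m M h₀ d}

/-- The flatness `fl M` of `M`: the minimum of `fl M(h)` over `h ∈ M`. -/
def flatness {H : Type*} [NormedAddCommGroup H] [NormedSpace ℝ H]
    (k m : ℕ) (M : Set H) : ℕ :=
  sInf (flatnessAt k m M '' M)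


open Set Filter Asymptotics Metric

lemma exists_left_inverse_clm {E H : Type*} [NormedAddCommGroup E] [NormedSpace ℝ E]
    [FiniteDimensional ℝ E] [NormedAddCommGroup H] [InnerProductSpace ℝ H]
    (A : E →L[ℝ] H) (hA : Function.Injective A) :
    ∃ C : H →L[ℝ] E, ∀ v, C (A v) = v := by
  have hA' : Function.Injective (A : E →ₗ[ℝ] H) := hA
  set T : Submodule ℝ H := LinearMap.range (A : E →ₗ[ℝ] H) with hT
  have : FiniteDimensional ℝ T := by infer_instance
  let e : E ≃ₗ[ℝ] T := LinearEquiv.ofInjective (A : E →ₗ[ℝ] H) hA'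
  let C : H →L[ℝ] E :=
    (LinearMap.toContinuousLinearMap (e.symm.toLinearMap)).comp (Submodule.orthogonalProjectionOnto T)
  refine ⟨C, fun v => ?_⟩
  have h1 : Submodule.orthogonalProjectionOnto T (A v) = e v := by
    have : (A v : H) = ((e v : T) : H) := by
      exact (LinearEquiv.ofInjective_apply _ v).symm
    rw [this, Submodule.orthogonalProjectionOnto_mem_subspace_eq_self]
  show (LinearMap.toContinuousLinearMap (e.symm.toLinearMap)) (Submodule.orthogonalProjectionOnto T (A v)) = v
  rw [h1]
  simp [e]
open Filter Asymptotics Metric Topology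

/-- `v` is a tangent vector to `M` at `h` in the limit sense. -/
def LimitTangent {H : Type*} [NormedAddCommGroup H] [NormedSpace ℝ H] (M : Set H) (h v : H) : Prop :=
  ∃ c : ℝ → H, (∀ᶠ t in 𝓝[>] (0:ℝ), c t ∈ M) ∧ Filter.Tendsto c (𝓝[>] (0:ℝ)) (𝓝 h) ∧
    Filter.Tendsto (fun t => t⁻¹ • (c t - h)) (𝓝[>] (0:ℝ)) (𝓝 v)

lemma limitTangent_of_mem_tangentSet {H : Type*} [NormedAddCommGroup H] [NormedSpace ℝ H]
    {k m : ℕ} (hk : 1 ≤ k) {M : Set H} {h v : H} (hv : v ∈ TangentSet k m M h) :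
    LimitTangent M h v := by
  obtain ⟨V, φ, U, hp, y, hyV, hyh, u, hu⟩ := hv
  have hφd : HasFDerivAt φ (fderiv ℝ φ y) y :=
    ((hp.contDiffOn.differentiableOn (by norm_cast; omega)).differentiableAt
      (hp.isOpen_V.mem_nhds hyV)).hasFDerivAt
  have h2 : HasDerivAt (fun t : ℝ => y + t • u) u 0 := by
    simpa using ((hasDerivAt_id (0:ℝ)).smul_const u).const_add y
  have h0 : y + (0:ℝ) • u = y := by simp
  have hγ : HasDerivAt (fun t : ℝ => φ (y + t • u)) v 0 := by
    have := HasFDerivAt.comp_hasDerivAt 0 (h0 ▸ hφd) h2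
    simpa [hu, Function.comp_def] using this
  refine ⟨fun t => φ (y + t • u), ?_, ?_, ?_⟩
  · have hev : ∀ᶠ t : ℝ in 𝓝 0, y + t • u ∈ V :=
      h2.continuousAt.preimage_mem_nhds (by rw [h0]; exact hp.isOpen_V.mem_nhds hyV)
    refine (hev.filter_mono nhdsWithin_le_nhds).mono fun t ht => ?_
    have : φ (y + t • u) ∈ φ '' V := Set.mem_image_of_mem φ ht
    rw [hp.image_eq] at this
    exact this.2
  · have h3 : Filter.Tendsto (fun t : ℝ => φ (y + t • u)) (𝓝 0) (𝓝 (φ y)) := by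
      have := hγ.continuousAt.tendsto; rwa [h0] at this
    rw [hyh] at h3
    exact h3.mono_left nhdsWithin_le_nhds
  · have hs := hasDerivAt_iff_tendsto_slope.mp hγ
    have hmono : 𝓝[>] (0:ℝ) ≤ 𝓝[≠] (0:ℝ) :=
      nhdsWithin_mono 0 (fun x hx => ne_of_gt hx)
    have := hs.mono_left hmono
    refine this.congr fun t => ?_
    rw [slope_def_module]
    simp [h0, hyh]
lemma mem_range_fderiv_of_limitTangent {E H : Type*} [NormedAddCommGroup E] [NormedSpace ℝ E]
    [FiniteDimensional ℝ E] [NormedAddCommGroup H] [InnerProductSpace ℝ H]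
    {k : ℕ} (hk : 1 ≤ k) {M : Set H} {h₀ : H} {V : Set E} {φ : E → H} {U' : Set H}
    (hp : IsParametrization k M h₀ V φ U') {z : E} (hz : z ∈ V)
    {v : H} (hv : LimitTangent M (φ z) v) : v ∈ Set.range (fderiv ℝ φ z) := by
  obtain ⟨c, hcM, hch, hcv⟩ := hv
  set D := fderiv ℝ φ z with hDdef
  obtain ⟨C, hC⟩ := exists_left_inverse_clm D (hp.fderiv_injective z hz)
  obtain ⟨ψ, hψc, hψφ⟩ := hp.exists_contInv
  set l₀ : Filter ℝ := 𝓝[>] (0:ℝ) with hl₀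
  have hφz_mem : φ z ∈ U' ∩ M := by rw [← hp.image_eq]; exact ⟨z, hz, rfl⟩
  have hcU : ∀ᶠ t in l₀, c t ∈ U' ∩ M := by
    have h1 : ∀ᶠ t in l₀, c t ∈ U' := hch (hp.isOpen_U.mem_nhds hφz_mem.1)
    exact (h1.and hcM).mono fun t ht => ⟨ht.1, ht.2⟩
  have hkey : ∀ᶠ t in l₀, ψ (c t) ∈ V ∧ φ (ψ (c t)) = c t := by
    refine hcU.mono fun t ht => ?_
    rw [← hp.image_eq] at ht
    obtain ⟨w, hwV, hw⟩ := ht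
    rw [← hw, hψφ w hwV]
    exact ⟨hwV, rfl⟩
  set ζ : ℝ → E := fun t => ψ (c t) with hζdef
  have hζz : Filter.Tendsto ζ l₀ (𝓝 z) := by
    have h1 : Filter.Tendsto c l₀ (𝓝[U' ∩ M] (φ z)) := by
      rw [tendsto_nhdsWithin_iff]; exact ⟨hch, hcU⟩
    have h2 := ((hψc (φ z) hφz_mem).tendsto).comp h1
    rwa [hψφ z hz] at h2
  have hφd : HasFDerivAt φ D z :=
    ((hp.contDiffOn.differentiableOn (by norm_cast; omega)).differentiableAt
      (hp.isOpen_V.mem_nhds hz)).hasFDerivAt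
  have hlo : (fun t => φ (ζ t) - φ z - D (ζ t - z)) =o[l₀] (fun t => ζ t - z) :=
    hφd.isLittleO.comp_tendsto hζz
  set K := ‖C‖ + 1 with hK
  have hKpos : (0:ℝ) < K := by positivity
  have hCle : ∀ x : H, ‖C x‖ ≤ K * ‖x‖ := fun x =>
    (C.le_opNorm x).trans (mul_le_mul_of_nonneg_right (by simp [hK]) (norm_nonneg x))
  clear_value K
  have hev1 : ∀ᶠ t in l₀, ‖φ (ζ t) - φ z - D (ζ t - z)‖ ≤ (1/(2*K)) * ‖ζ t - z‖ :=
    hlo.def (one_div_pos.mpr (by linarith))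
  have hcb : ∀ᶠ t in l₀, ‖c t - φ z‖ ≤ (‖v‖+1) * t := by
    have h1 : ∀ᶠ t in l₀, ‖t⁻¹ • (c t - φ z)‖ < ‖v‖ + 1 :=
      (hcv.norm).eventually_lt_const (lt_add_one ‖v‖)
    filter_upwards [h1, self_mem_nhdsWithin] with t ht htpos
    have htpos' : (0:ℝ) < t := htpos
    have e : ‖c t - φ z‖ = t * ‖t⁻¹ • (c t - φ z)‖ := by
      rw [norm_smul, norm_inv, Real.norm_eq_abs, abs_of_pos htpos']
      field_simp
    rw [e]
    nlinarith [norm_nonneg (t⁻¹ • (c t - φ z))]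
  have hbound : ∀ᶠ t in l₀, ‖ζ t - z‖ ≤ (2*K) * ‖c t - φ z‖ := by
    filter_upwards [hev1, hkey] with t h1 h2
    have e1 : ζ t - z = C (φ (ζ t) - φ z) - C (φ (ζ t) - φ z - D (ζ t - z)) := by
      rw [← map_sub, show φ (ζ t) - φ z - (φ (ζ t) - φ z - D (ζ t - z)) = D (ζ t - z) by abel,
        hC]
    have e2 : ‖ζ t - z‖ ≤ K * ‖φ (ζ t) - φ z‖ + K * ‖φ (ζ t) - φ z - D (ζ t - z)‖ := by
      calc ‖ζ t - z‖ = ‖C (φ (ζ t) - φ z) - C (φ (ζ t) - φ z - D (ζ t - z))‖ := by rw [← e1]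
        _ ≤ ‖C (φ (ζ t) - φ z)‖ + ‖C (φ (ζ t) - φ z - D (ζ t - z))‖ := norm_sub_le _ _
        _ ≤ K * ‖φ (ζ t) - φ z‖ + K * ‖φ (ζ t) - φ z - D (ζ t - z)‖ := add_le_add (hCle _) (hCle _)
    have e3 : K * ‖φ (ζ t) - φ z - D (ζ t - z)‖ ≤ ‖ζ t - z‖ / 2 := by
      have := mul_le_mul_of_nonneg_left h1 (le_of_lt hKpos)
      calc K * ‖φ (ζ t) - φ z - D (ζ t - z)‖ ≤ K * ((1/(2*K)) * ‖ζ t - z‖) := this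
        _ = ‖ζ t - z‖ / 2 := by field_simp
    rw [h2.2] at e2 e3
    linarith
  have hζbigO : (fun t => ζ t - z) =O[l₀] (fun t : ℝ => t) := by
    rw [Asymptotics.isBigO_iff]
    refine ⟨(2*K) * (‖v‖+1), ?_⟩
    filter_upwards [hbound, hcb, self_mem_nhdsWithin] with t h1 h2 htpos
    have htpos' : (0:ℝ) < t := htpos
    rw [Real.norm_eq_abs, abs_of_pos htpos']
    calc ‖ζ t - z‖ ≤ (2*K) * ‖c t - φ z‖ := h1
      _ ≤ (2*K) * ((‖v‖+1) * t) := by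
          exact mul_le_mul_of_nonneg_left h2 (by positivity)
      _ = (2*K) * (‖v‖+1) * t := by ring
  have hrt : Filter.Tendsto (fun t => t⁻¹ • (φ (ζ t) - φ z - D (ζ t - z))) l₀ (𝓝 0) :=
    (hlo.trans_isBigO hζbigO).tendsto_inv_smul_nhds_zero
  -- ζ slope tends to C v
  have hζslope : Filter.Tendsto (fun t => t⁻¹ • (ζ t - z)) l₀ (𝓝 (C v)) := by
    have h1 : Filter.Tendsto (fun t => C (t⁻¹ • (c t - φ z)) -
        t⁻¹ • C (φ (ζ t) - φ z - D (ζ t - z))) l₀ (𝓝 (C v - 0)) := by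
      refine Filter.Tendsto.sub (C.continuous.continuousAt.tendsto.comp hcv) ?_
      have := (C.continuous.continuousAt.tendsto.comp hrt)
      simp only [map_zero] at this
      refine Filter.Tendsto.congr (fun t => ?_) this
      simp [map_smul]
    rw [sub_zero] at h1
    refine Filter.Tendsto.congr' ?_ h1
    filter_upwards [hkey] with t h2
    have e1 : ζ t - z = C (c t - φ z) - C (φ (ζ t) - φ z - D (ζ t - z)) := by
      rw [← h2.2, ← map_sub, show φ (ζ t) - φ z - (φ (ζ t) - φ z - D (ζ t - z)) = D (ζ t - z) by
        abel, hC]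
    rw [map_smul, ← smul_sub, ← e1]
  -- final limit comparison
  have hfin : Filter.Tendsto (fun t => t⁻¹ • (c t - φ z)) l₀ (𝓝 (D (C v))) := by
    have h1 : Filter.Tendsto (fun t => D (t⁻¹ • (ζ t - z)) +
        t⁻¹ • (φ (ζ t) - φ z - D (ζ t - z))) l₀ (𝓝 (D (C v) + 0)) :=
      Filter.Tendsto.add (D.continuous.continuousAt.tendsto.comp hζslope) hrt
    rw [add_zero] at h1
    refine Filter.Tendsto.congr' ?_ h1
    filter_upwards [hkey] with t h2
    rw [map_smul, ← smul_add]
    congr 1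
    rw [← h2.2]
    abel
  have := tendsto_nhds_unique hcv hfin
  exact ⟨C v, this.symm⟩
abbrev Euc (m : ℕ) := EuclideanSpace ℝ (Fin m)

/- STATEMENT 1: local direct sum decomposition of `M` (Proposition A.8 (1)). -
-/
set_option maxHeartbeats 2000000 in
/-- local direct sum decomposition of `M` (Proposition A.8 (1)). -/
theorem stmt1 {H : Type*} [NormedAddCommGroup H] [InnerProductSpace ℝ H] [CompleteSpace H]
    (k m : ℕ) (hk : 1 ≤ k) (hm : 1 ≤ m) (M : Set H) (hM : IsSubmanifold k m M)
    (h₀ : H) (h₀M : h₀ ∈ M) (L : Submodule ℝ H) [FiniteDimensional ℝ L]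
    (U : Set H) (hU : IsOpen U) (h₀U : h₀ ∈ U)
    (htang : ∀ h ∈ U ∩ M, (L : Set H) ⊆ TangentSet k m M h)
    (h₁ : Lᗮ) (h₂ : L) (hdec : h₀ = (h₁ : H) + (h₂ : H)) :
    ∃ (U₁ : Set Lᗮ) (U₂ : Set L) (U₀ : Set H),
      IsOpen U₁ ∧ h₁ ∈ U₁ ∧ IsOpen U₂ ∧ h₂ ∈ U₂ ∧
      U₀ = (Subtype.val '' U₁ : Set H) + (Subtype.val '' U₂ : Set H) ∧
      IsOpen U₀ ∧ h₀ ∈ U₀ ∧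
      U₀ ∩ M = U₀ ∩ ((U₀ ∩ M) + (L : Set H)) := by
  classical
  obtain ⟨-, hpar⟩ := hM
  obtain ⟨V0, φ, U', hp⟩ := hpar h₀ h₀M
  obtain ⟨y₀, hy₀V, hy₀⟩ : ∃ y₀ ∈ V0, φ y₀ = h₀ := by
    have h1 : h₀ ∈ φ '' V0 := by rw [hp.image_eq]; exact ⟨hp.h₀_mem_U, h₀M⟩
    obtain ⟨y₀, hh1, hh2⟩ := h1; exact ⟨y₀, hh1, hh2⟩
  have hφdiff : ∀ z ∈ V0, HasFDerivAt φ (fderiv ℝ φ z) z := fun z hz =>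
    ((hp.contDiffOn.differentiableOn (by norm_cast; omega)).differentiableAt
      (hp.isOpen_V.mem_nhds hz)).hasFDerivAt
  obtain ⟨B, hB⟩ := exists_left_inverse_clm (fderiv ℝ φ y₀) (hp.fderiv_injective y₀ hy₀V)
  -- the open set where the tangency hypothesis applies
  set V' : Set (Euc m) := V0 ∩ φ ⁻¹' U with hV'def
  have hV'open : IsOpen V' :=
    ContinuousOn.isOpen_inter_preimage hp.contDiffOn.continuousOn hp.isOpen_V hU
  have hy₀V' : y₀ ∈ V' := ⟨hy₀V, by simp only [Set.mem_preimage, hy₀]; exact h₀U⟩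
  have hφM : ∀ z ∈ V0, φ z ∈ U' ∩ M := by
    intro z hz; rw [← hp.image_eq]; exact ⟨z, hz, rfl⟩
  have hrange : ∀ z ∈ V', (L : Set H) ⊆ Set.range (fderiv ℝ φ z) := by
    intro z hz l hl
    exact mem_range_fderiv_of_limitTangent hk hp hz.1
      (limitTangent_of_mem_tangentSet hk (htang (φ z) ⟨hz.2, (hφM z hz.1).2⟩ hl))
  -- the chart-straightening map F
  set F : (Euc m) → (Euc m) := fun z => B (φ z - h₀) with hFdef
  have hFd : ∀ z ∈ V0, HasFDerivAt F (B.comp (fderiv ℝ φ z)) z := fun z hz =>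
    B.hasFDerivAt.comp z ((hφdiff z hz).sub_const h₀)
  have hBA : B.comp (fderiv ℝ φ y₀) = ContinuousLinearMap.id ℝ (Euc m) := by
    ext v; simp [hB]
  have hφcd : ContDiffAt ℝ 1 φ y₀ :=
    (hp.contDiffOn.contDiffAt (hp.isOpen_V.mem_nhds hy₀V)).of_le (by exact_mod_cast hk)
  have hFcd : ContDiffAt ℝ 1 F y₀ :=
    B.contDiff.contDiffAt.comp y₀ (hφcd.sub contDiffAt_const)
  have hS : HasStrictFDerivAt F
      ((ContinuousLinearEquiv.refl ℝ (Euc m) : (Euc m) ≃L[ℝ] (Euc m)) : (Euc m) →L[ℝ] (Euc m)) y₀ := by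
    have h1 := hFcd.hasStrictFDerivAt' (hFd y₀ hy₀V) one_ne_zero
    rw [hBA] at h1
    exact h1
  set Floc := hS.toOpenPartialHomeomorph F with hFlocdef
  have hFloccoe : (Floc : (Euc m) → (Euc m)) = F := hS.toOpenPartialHomeomorph_coe
  have hy₀src : y₀ ∈ Floc.source := hS.mem_toOpenPartialHomeomorph_source
  have hFy₀ : F y₀ = 0 := by simp [hFdef, hy₀]
  have h0tgt : (0 : (Euc m)) ∈ Floc.target := by
    have := hS.image_mem_toOpenPartialHomeomorph_target
    rwa [hFy₀] at this
  have hsymm0 : Floc.symm 0 = y₀ := by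
    have := Floc.left_inv hy₀src
    rwa [hFloccoe, hFy₀] at this
  -- the set where the derivative of F is invertible
  have hfderivCont : ContinuousOn (fun z => fderiv ℝ φ z) V0 :=
    hp.contDiffOn.continuousOn_fderiv_of_isOpen hp.isOpen_V (by exact_mod_cast hk)
  set J : (Euc m) → ((Euc m) →L[ℝ] (Euc m)) := fun z => B.comp (fderiv ℝ φ z) with hJdef
  have hJcont : ContinuousOn J V0 :=
    ((ContinuousLinearMap.compL ℝ (Euc m) H (Euc m) B).continuous.comp_continuousOn hfderivCont)
  set V₂ : Set (Euc m) := V0 ∩ (fun z => ‖J z - ContinuousLinearMap.id ℝ (Euc m)‖) ⁻¹'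
      (Set.Iio (1/2)) with hV₂def
  have hV₂open : IsOpen V₂ :=
    ContinuousOn.isOpen_inter_preimage ((hJcont.sub continuousOn_const).norm)
      hp.isOpen_V isOpen_Iio
  have hy₀V₂ : y₀ ∈ V₂ := by
    refine ⟨hy₀V, ?_⟩
    simp only [Set.mem_preimage, Set.mem_Iio, hJdef, hBA, sub_self, norm_zero]
    norm_num
  have hJbij : ∀ z ∈ V₂, Function.Bijective (J z) := by
    intro z hz
    have hzn : ‖J z - ContinuousLinearMap.id ℝ (Euc m)‖ < 1/2 := hz.2
    have hinj : Function.Injective (J z) := by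
      intro x y hxy
      have h1 : (J z) (x - y) = 0 := by rw [map_sub, hxy, sub_self]
      have h3 : x - y = -((J z - ContinuousLinearMap.id ℝ (Euc m)) (x - y)) := by
        simp [h1]
      have h2 : ‖x - y‖ ≤ (1/2) * ‖x - y‖ := by
        calc ‖x - y‖ = ‖(J z - ContinuousLinearMap.id ℝ (Euc m)) (x - y)‖ := by
              conv_lhs => rw [h3]
              rw [norm_neg]
          _ ≤ ‖J z - ContinuousLinearMap.id ℝ (Euc m)‖ * ‖x - y‖ :=
              ContinuousLinearMap.le_opNorm _ _
          _ ≤ (1/2) * ‖x - y‖ := by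
              nlinarith [norm_nonneg (x - y)]
      have h4 : ‖x - y‖ = 0 := by linarith [norm_nonneg (x - y)]
      have := norm_eq_zero.mp h4
      exact sub_eq_zero.mp this
    have hsurj : Function.Surjective (J z) := by
      have := (LinearMap.injective_iff_surjective
        (f := ((J z : (Euc m) →L[ℝ] (Euc m)) : (Euc m) →ₗ[ℝ] (Euc m)))).mp hinj
      exact this
    exact ⟨hinj, hsurj⟩
  -- choose the radius ρ
  obtain ⟨ρ, hρpos, hρsub⟩ : ∃ ρ > 0, Metric.ball (0:(Euc m)) ρ ⊆
      Floc.target ∩ Floc.symm ⁻¹' (V' ∩ V₂) := by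
    have hop : IsOpen (Floc.target ∩ Floc.symm ⁻¹' (V' ∩ V₂)) :=
      Floc.isOpen_inter_preimage_symm (hV'open.inter hV₂open)
    have hmem : (0:(Euc m)) ∈ Floc.target ∩ Floc.symm ⁻¹' (V' ∩ V₂) := by
      refine ⟨h0tgt, ?_⟩
      simp only [Set.mem_preimage, hsymm0]
      exact ⟨hy₀V', hy₀V₂⟩
    exact Metric.isOpen_iff.mp hop 0 hmem
  have hWt : Metric.ball (0:(Euc m)) ρ ⊆ Floc.target := fun w hw => (hρsub hw).1
  have hgV : ∀ w ∈ Metric.ball (0:(Euc m)) ρ, Floc.symm w ∈ V' ∩ V₂ := fun w hw => (hρsub hw).2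
  have hFg : ∀ w ∈ Metric.ball (0:(Euc m)) ρ, F (Floc.symm w) = w := by
    intro w hw
    have := Floc.right_inv (hWt hw)
    rwa [hFloccoe] at this
  -- derivative of φ ∘ Floc.symm
  have hσd : ∀ w ∈ Metric.ball (0:(Euc m)) ρ, ∀ l ∈ (L : Set H),
      ∃ T : (Euc m) →L[ℝ] H, HasFDerivAt (fun w' => φ (Floc.symm w')) T w ∧ T (B l) = l := by
    intro w hw l hl
    obtain ⟨hzV', hzV₂⟩ := hgV w hw
    set z := Floc.symm w with hzdef
    have hbij := hJbij z hzV₂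
    let e : (Euc m) ≃L[ℝ] (Euc m) := LinearEquiv.toContinuousLinearEquiv
      (LinearEquiv.ofBijective ((J z : (Euc m) →L[ℝ] (Euc m)) : (Euc m) →ₗ[ℝ] (Euc m)) hbij)
    have hecoe : (e : (Euc m) →L[ℝ] (Euc m)) = J z := by ext v; rfl
    have hFz : HasFDerivAt F (e : (Euc m) →L[ℝ] (Euc m)) z := by
      rw [hecoe]; exact hFd z hzV'.1
    have hgc : ContinuousAt Floc.symm w :=
      Floc.symm.continuousAt (by rw [Floc.symm_source]; exact hWt hw)
    have hev : ∀ᶠ w' in nhds w, F (Floc.symm w') = w' :=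
      (Metric.isOpen_ball.eventually_mem hw).mono fun w' hw' => hFg w' hw'
    have hgd : HasFDerivAt Floc.symm ((e.symm : (Euc m) →L[ℝ] (Euc m))) w :=
      hFz.of_local_left_inverse hgc hev
    obtain ⟨x, hx⟩ := hrange z hzV' hl
    refine ⟨(fderiv ℝ φ z).comp (e.symm : (Euc m) →L[ℝ] (Euc m)),
      (hφdiff z hzV'.1).comp w hgd, ?_⟩
    have hex : e x = B l := by
      have h5 : (e : (Euc m) →L[ℝ] (Euc m)) x = (J z) x := by rw [hecoe]
      rw [ContinuousLinearEquiv.coe_coe] at h5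
      rw [h5]
      simp only [hJdef, ContinuousLinearMap.comp_apply, hx]
    have hesymm : (e.symm : (Euc m) →L[ℝ] (Euc m)) (B l) = x := by
      rw [← hex]
      exact e.symm_apply_apply x
    simp only [ContinuousLinearMap.comp_apply, hesymm, hx]
  -- the key translation identity
  have hseg : ∀ w₁ ∈ Metric.ball (0:(Euc m)) ρ, ∀ l ∈ (L : Set H),
      w₁ + B l ∈ Metric.ball (0:(Euc m)) ρ →
      φ (Floc.symm (w₁ + B l)) = φ (Floc.symm w₁) + l := by
    intro w₁ hw₁ l hl hw₂
    set c : ℝ → H := fun s => φ (Floc.symm (w₁ + s • B l)) - s • l with hcdef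
    have hmem : ∀ s ∈ Set.Icc (0:ℝ) 1, w₁ + s • B l ∈ Metric.ball (0:(Euc m)) ρ := by
      intro s hs
      have h1 := (convex_ball (0:(Euc m)) ρ) hw₁ hw₂ (by linarith [hs.2] : (0:ℝ) ≤ 1 - s)
        hs.1 (by ring)
      convert h1 using 1
      module
    have hderiv : ∀ s ∈ Set.Icc (0:ℝ) 1, HasDerivAt c 0 s := by
      intro s hs
      obtain ⟨T, hT, hTl⟩ := hσd _ (hmem s hs) l hl
      have hin : HasDerivAt (fun s : ℝ => w₁ + s • B l) (B l) s := by
        simpa using ((hasDerivAt_id s).smul_const (B l)).const_add w₁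
      have hcomp : HasDerivAt (fun s : ℝ => φ (Floc.symm (w₁ + s • B l))) (T (B l)) s :=
        by have := hT.comp_hasDerivAt s hin; exact this
      have h2 : HasDerivAt (fun s : ℝ => s • l) l s := by
        simpa using (hasDerivAt_id s).smul_const l
      have := hcomp.sub h2
      rw [hTl, sub_self] at this
      exact this
    have hc10 : c 1 = c 0 :=
      constant_of_has_deriv_right_zero
        (fun s hs => ((hderiv s hs).continuousAt).continuousWithinAt)
        (fun s hs => ((hderiv s (Set.mem_Icc_of_Ico hs)).hasDerivWithinAt))
        1 (Set.right_mem_Icc.mpr zero_le_one)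
    simp only [hcdef, one_smul, zero_smul, add_zero, sub_zero] at hc10
    exact eq_add_of_sub_eq hc10
  -- σ '' W = M ∩ G for an open G
  obtain ⟨ψ, hψc, hψφ⟩ := hp.exists_contInv
  set V₃ : Set (Euc m) := Floc.symm '' (Metric.ball 0 ρ) with hV₃def
  have hV₃eq : V₃ = Floc.source ∩ F ⁻¹' (Metric.ball 0 ρ) := by
    rw [hV₃def, Floc.symm_image_eq_source_inter_preimage hWt, hFloccoe]
  have hV₃open : IsOpen V₃ := by
    rw [hV₃eq, ← hFloccoe]
    exact Floc.isOpen_inter_preimage Metric.isOpen_ball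
  have hV₃V' : V₃ ⊆ V' := by
    rintro z ⟨w, hw, rfl⟩; exact (hgV w hw).1
  obtain ⟨O, hOopen, hOeq⟩ : ∃ O, IsOpen O ∧ ψ ⁻¹' V₃ ∩ (U' ∩ M) = O ∩ (U' ∩ M) :=
    continuousOn_iff'.mp hψc V₃ hV₃open
  set G := O ∩ U' with hGdef
  have hGopen : IsOpen G := hOopen.inter hp.isOpen_U
  have hMG : M ∩ G = φ '' V₃ := by
    ext x
    constructor
    · rintro ⟨hxM, hxO, hxU'⟩
      have hxUM : x ∈ U' ∩ M := ⟨hxU', hxM⟩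
      have hx2 : x ∈ φ '' V0 := by rw [hp.image_eq]; exact hxUM
      obtain ⟨v, hvV, rfl⟩ := hx2
      have : φ v ∈ ψ ⁻¹' V₃ ∩ (U' ∩ M) := by
        rw [hOeq]; exact ⟨hxO, hxUM⟩
      have hψx : ψ (φ v) ∈ V₃ := this.1
      rw [hψφ v hvV] at hψx
      exact ⟨v, hψx, rfl⟩
    · rintro ⟨v, hvV₃, rfl⟩
      have hvV0 : v ∈ V0 := (hV₃V' hvV₃).1
      have hxUM := hφM v hvV0
      have hmem : φ v ∈ ψ ⁻¹' V₃ ∩ (U' ∩ M) := by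
        refine ⟨?_, hxUM⟩
        simp only [Set.mem_preimage, hψφ v hvV0]
        exact hvV₃
      rw [hOeq] at hmem
      exact ⟨hxUM.2, hmem.1, hxUM.1⟩
  have hh₀G : h₀ ∈ M ∩ G := by
    rw [hMG]
    exact ⟨Floc.symm 0, ⟨0, Metric.mem_ball_self hρpos, rfl⟩, by rw [hsymm0, hy₀]⟩
  -- coordinates of points of M ∩ G
  have hcoord : ∀ x ∈ M ∩ G, B (x - h₀) ∈ Metric.ball (0:(Euc m)) ρ ∧
      φ (Floc.symm (B (x - h₀))) = x := by
    intro x hx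
    rw [hMG] at hx
    obtain ⟨v, hv, rfl⟩ := hx
    obtain ⟨w, hw, rfl⟩ := hv
    have : B (φ (Floc.symm w) - h₀) = w := by
      have := hFg w hw
      simpa [hFdef] using this
    rw [this]
    exact ⟨hw, rfl⟩
  -- choose radii
  set δ : ℝ := ρ / (‖B‖ + 1) with hδdef
  have hδpos : 0 < δ := div_pos hρpos (by positivity)
  obtain ⟨r₁, hr₁pos, hr₁sub⟩ : ∃ r₁ > 0, Metric.ball h₀ r₁ ⊆ G :=
    Metric.isOpen_iff.mp hGopen h₀ hh₀G.2
  set r : ℝ := min (r₁/2) (δ/2) with hrdef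
  have hrpos : 0 < r := lt_min (by linarith) (by linarith)
  -- the orthogonal projection machinery
  have hQmem : ∀ x : H, x - (L.orthogonalProjectionOnto x : H) ∈ Lᗮ := fun x =>
    L.sub_starProjection_mem_orthogonal x
  set Pc : H → H := fun x => (L.orthogonalProjectionOnto x : H) with hPcdef
  have hPccont : Continuous Pc :=
    continuous_subtype_val.comp (L.orthogonalProjectionOnto).continuous
  set U₁ : Set Lᗮ := Subtype.val ⁻¹' Metric.ball (h₁:H) r with hU₁def
  set U₂ : Set L := Subtype.val ⁻¹' Metric.ball (h₂:H) r with hU₂def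
  set U₀ : Set H := (Subtype.val '' U₁ : Set H) + (Subtype.val '' U₂ : Set H) with hU₀def
  -- characterization of U₀
  have hU₀char : ∀ x : H, x ∈ U₀ ↔ ‖(x - Pc x) - (h₁:H)‖ < r ∧ ‖Pc x - (h₂:H)‖ < r := by
    intro x
    constructor
    · intro hx
      rw [hU₀def, Set.mem_add] at hx
      obtain ⟨a, ⟨u, hu, rfl⟩, b, ⟨v, hv, rfl⟩, rfl⟩ := hx
      have hPu : L.orthogonalProjectionOnto (u:H) = 0 :=
        Submodule.orthogonalProjectionOnto_apply_of_mem_orthogonal u.2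
      have hPv : L.orthogonalProjectionOnto (v:H) = v :=
        Submodule.orthogonalProjectionOnto_mem_subspace_eq_self v
      have hPsum : Pc ((u:H) + (v:H)) = (v:H) := by
        simp only [hPcdef, map_add, hPu, hPv, Submodule.coe_add, ZeroMemClass.coe_zero,
          zero_add]
      rw [hPsum]
      constructor
      · have : (u:H) + (v:H) - (v:H) = (u:H) := by abel
        rw [this]
        simpa [hU₁def, Metric.mem_ball, dist_eq_norm] using hu
      · simpa [hU₂def, Metric.mem_ball, dist_eq_norm] using hv
    · rintro ⟨hx1, hx2⟩
      rw [hU₀def, Set.mem_add]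
      refine ⟨x - Pc x, ⟨⟨x - Pc x, hQmem x⟩, ?_, rfl⟩,
        Pc x, ⟨L.orthogonalProjectionOnto x, ?_, rfl⟩, by abel⟩
      · simpa [hU₁def, Metric.mem_ball, dist_eq_norm] using hx1
      · simp only [hU₂def, Set.mem_preimage, Metric.mem_ball, dist_eq_norm]; exact hx2
  have hU₀open : IsOpen U₀ := by
    have : U₀ = {x : H | ‖(x - Pc x) - (h₁:H)‖ < r ∧ ‖Pc x - (h₂:H)‖ < r} := by
      ext x; exact hU₀char x
    rw [this]
    apply IsOpen.inter
    · exact isOpen_lt (((continuous_id.sub hPccont).sub continuous_const).norm)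
        continuous_const
    · exact isOpen_lt ((hPccont.sub continuous_const).norm) continuous_const
  have hU₀dist : ∀ x ∈ U₀, ‖x - h₀‖ < 2 * r := by
    intro x hx
    obtain ⟨hx1, hx2⟩ := (hU₀char x).mp hx
    have : x - h₀ = ((x - Pc x) - (h₁:H)) + (Pc x - (h₂:H)) := by
      rw [hdec]; abel
    rw [this]
    calc ‖((x - Pc x) - (h₁:H)) + (Pc x - (h₂:H))‖ ≤
        ‖(x - Pc x) - (h₁:H)‖ + ‖Pc x - (h₂:H)‖ := norm_add_le _ _
      _ < 2 * r := by linarith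
  have hU₀G : ∀ x ∈ U₀, x ∈ G := by
    intro x hx
    apply hr₁sub
    rw [Metric.mem_ball, dist_eq_norm]
    have h2r : 2 * r ≤ r₁ := by
      have := min_le_left (r₁/2) (δ/2)
      rw [hrdef] at *
      linarith
    linarith [hU₀dist x hx]
  have hU₀B : ∀ x ∈ U₀, B (x - h₀) ∈ Metric.ball (0:(Euc m)) ρ := by
    intro x hx
    rw [Metric.mem_ball, dist_eq_norm, sub_zero]
    calc ‖B (x - h₀)‖ ≤ ‖B‖ * ‖x - h₀‖ := B.le_opNorm _
      _ ≤ ‖B‖ * (2 * r) := by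
          exact mul_le_mul_of_nonneg_left (le_of_lt (hU₀dist x hx)) (norm_nonneg B)
      _ ≤ ‖B‖ * δ := by
          have h2r : 2 * r ≤ δ := by
            have := min_le_right (r₁/2) (δ/2)
            rw [hrdef] at *
            linarith
          exact mul_le_mul_of_nonneg_left h2r (norm_nonneg B)
      _ < ρ := by
          have hb : (0:ℝ) < ‖B‖ + 1 := by positivity
          rw [hδdef, mul_div_assoc']
          rw [div_lt_iff₀ hb]
          nlinarith [norm_nonneg B]
  have hPch₀ : Pc h₀ = (h₂:H) := by
    rw [hdec]
    simp only [hPcdef, map_add,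
      Submodule.orthogonalProjectionOnto_apply_of_mem_orthogonal h₁.2,
      Submodule.orthogonalProjectionOnto_mem_subspace_eq_self h₂, Submodule.coe_add,
      ZeroMemClass.coe_zero, zero_add]
  have hh₀U₀ : h₀ ∈ U₀ := by
    rw [hU₀char]
    rw [hPch₀]
    constructor
    · have : h₀ - (h₂:H) - (h₁:H) = 0 := by rw [hdec]; abel
      rw [this, norm_zero]; exact hrpos
    · have : (h₂:H) - (h₂:H) = 0 := by abel
      rw [this, norm_zero]; exact hrpos
  refine ⟨U₁, U₂, U₀, Metric.isOpen_ball.preimage continuous_subtype_val, ?_,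
    Metric.isOpen_ball.preimage continuous_subtype_val, ?_, hU₀def, hU₀open, hh₀U₀, ?_⟩
  · simp only [hU₁def, Set.mem_preimage]
    exact Metric.mem_ball_self hrpos
  · simp only [hU₂def, Set.mem_preimage]
    exact Metric.mem_ball_self hrpos
  apply Set.Subset.antisymm
  · intro x hx
    exact ⟨hx.1, Set.mem_add.mpr ⟨x, hx, 0, L.zero_mem, add_zero x⟩⟩
  · rintro x ⟨hxU₀, hxsum⟩
    rw [Set.mem_add] at hxsum
    obtain ⟨y, hy, l, hl, rfl⟩ := hxsum
    refine ⟨hxU₀, ?_⟩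
    have hyG : y ∈ M ∩ G := ⟨hy.2, hU₀G y hy.1⟩
    obtain ⟨hyball, hyeq⟩ := hcoord y hyG
    have hx2 : B (y + l - h₀) ∈ Metric.ball (0:(Euc m)) ρ := hU₀B _ hxU₀
    have hBeq : B (y - h₀) + B l = B (y + l - h₀) := by
      rw [← map_add]; congr 1; abel
    have hkey := hseg (B (y - h₀)) hyball l hl (by rw [hBeq]; exact hx2)
    rw [hyeq] at hkey
    have hmem : φ (Floc.symm (B (y - h₀) + B l)) ∈ M ∩ G := by
      rw [hMG]
      exact ⟨Floc.symm (B (y - h₀) + B l), ⟨_, by rw [hBeq]; exact hx2, rfl⟩, rfl⟩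
    rw [hkey] at hmem
    exact hmem.1
end
end

section
/- Let H be a real Hilbert space, k ≥ 1 and m ≥ 1 integers, and let M be an m-dimensional C^k-submanifold of H that is closed as a subset of H. Let L ⊆ H be a finite-dimensional linear subspace such that L ⊆ T_h M for all h ∈ M. Then M = M + L. -/
open Set Pointwise

noncomputable section

section Aux

lemma exists_left_inverse {H : Type*} [NormedAddCommGroup H] [InnerProductSpace ℝ H] {m : ℕ}
    (A : EuclideanSpace ℝ (Fin m) →L[ℝ] H) (hA : Function.Injective A) :
    ∃ P : H →L[ℝ] EuclideanSpace ℝ (Fin m), ∀ x, P (A x) = x := by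
  set K := LinearMap.range (A.toLinearMap) with hK
  have hAinj : Function.Injective A.toLinearMap := hA
  let e := LinearEquiv.ofInjective A.toLinearMap hAinj
  let P : H →L[ℝ] EuclideanSpace ℝ (Fin m) :=
    (LinearMap.toContinuousLinearMap e.symm.toLinearMap).comp (K.orthogonalProjectionOnto)
  refine ⟨P, fun x => ?_⟩
  have h1 : K.orthogonalProjectionOnto (A x) = e x := by
    apply Subtype.ext
    change K.starProjection (A x) = _
    rw [Submodule.starProjection_eq_self_iff.mpr]
    · simp [e, LinearEquiv.ofInjective_apply]
    · exact LinearMap.mem_range_self _ x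
  simp [P, h1]

lemma isUnit_clm_injective {E : Type*} [NormedAddCommGroup E] [NormedSpace ℝ E]
    {T : E →L[ℝ] E} (h : IsUnit T) : Function.Injective T := by
  obtain ⟨u, hu⟩ := h
  intro a b hab
  have h1 : ((↑u⁻¹ * ↑u : E →L[ℝ] E)) a = ((↑u⁻¹ * ↑u : E →L[ℝ] E)) b := by
    simp only [ContinuousLinearMap.mul_apply, hu, hab]
  simpa [u.inv_mul] using h1

lemma range_fderiv_subset {H : Type*} [NormedAddCommGroup H] [InnerProductSpace ℝ H]
    {k m : ℕ} (hk : 1 ≤ k) {M : Set H} {p : H}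
    {V₁ V₂ : Set (EuclideanSpace ℝ (Fin m))} {φ₁ φ₂ : EuclideanSpace ℝ (Fin m) → H}
    {U₁ U₂ : Set H}
    (h₁ : IsParametrization k M p V₁ φ₁ U₁) (h₂ : IsParametrization k M p V₂ φ₂ U₂)
    {y₁ y₂ : EuclideanSpace ℝ (Fin m)} (hy₁ : y₁ ∈ V₁) (hy₂ : y₂ ∈ V₂)
    (e₁ : φ₁ y₁ = p) (e₂ : φ₂ y₂ = p) :
    Set.range (fderiv ℝ φ₁ y₁) ⊆ Set.range (fderiv ℝ φ₂ y₂) := by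
  have hkE : (1 : WithTop ℕ∞) ≤ (k : WithTop ℕ∞) := by exact_mod_cast hk
  have hφ₂at : ContDiffAt ℝ k φ₂ y₂ := h₂.contDiffOn.contDiffAt (h₂.isOpen_V.mem_nhds hy₂)
  have hφ₂diff : DifferentiableAt ℝ φ₂ y₂ := hφ₂at.differentiableAt (zero_lt_one.trans_le hkE).ne'
  set A := fderiv ℝ φ₂ y₂ with hAdef
  have hA : HasFDerivAt φ₂ A y₂ := hφ₂diff.hasFDerivAt
  obtain ⟨P, hPA⟩ := exists_left_inverse A (h₂.fderiv_injective y₂ hy₂)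
  set g : EuclideanSpace ℝ (Fin m) → EuclideanSpace ℝ (Fin m) := fun y => P (φ₂ y) with hgdef
  have hgat : ContDiffAt ℝ k g y₂ := P.contDiff.contDiffAt.comp y₂ hφ₂at
  have hPAid : P.comp A = ContinuousLinearMap.id ℝ _ := by
    ext x; simp [hPA]
  have hg' : HasFDerivAt g ((ContinuousLinearEquiv.refl ℝ (EuclideanSpace ℝ (Fin m)) :
      EuclideanSpace ℝ (Fin m) ≃L[ℝ] EuclideanSpace ℝ (Fin m)) :
      EuclideanSpace ℝ (Fin m) →L[ℝ] EuclideanSpace ℝ (Fin m)) y₂ := by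
    have := P.hasFDerivAt.comp y₂ hA
    rw [hPAid] at this; exact this
  have hs : HasStrictFDerivAt g ((ContinuousLinearEquiv.refl ℝ (EuclideanSpace ℝ (Fin m)) :
      EuclideanSpace ℝ (Fin m) ≃L[ℝ] EuclideanSpace ℝ (Fin m)) :
      EuclideanSpace ℝ (Fin m) →L[ℝ] EuclideanSpace ℝ (Fin m)) y₂ :=
    hgat.hasStrictFDerivAt' hg' (zero_lt_one.trans_le hkE).ne'
  set G := hs.localInverse g _ y₂ with hGdef
  have hGat : ContDiffAt ℝ k G (g y₂) := hgat.to_localInverse hg' (zero_lt_one.trans_le hkE).ne'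
  have hleft : ∀ᶠ x in nhds y₂, G (g x) = x := hs.eventually_left_inverse
  obtain ⟨ψ, hψcont, hψ⟩ := h₂.exists_contInv
  set s : EuclideanSpace ℝ (Fin m) → EuclideanSpace ℝ (Fin m) := fun y => ψ (φ₁ y) with hsdef
  have hφ₁at : ContDiffAt ℝ k φ₁ y₁ := h₁.contDiffOn.contDiffAt (h₁.isOpen_V.mem_nhds hy₁)
  have hφ₁c : ContinuousAt φ₁ y₁ := hφ₁at.continuousAt
  have hpU₂ : φ₁ y₁ ∈ U₂ := by rw [e₁]; exact h₂.h₀_mem_U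
  have ev1 : ∀ᶠ y in nhds y₁, φ₁ y ∈ U₂ ∩ M := by
    have hU : ∀ᶠ y in nhds y₁, φ₁ y ∈ U₂ := hφ₁c.eventually_mem (h₂.isOpen_U.mem_nhds hpU₂)
    have hV : ∀ᶠ y in nhds y₁, y ∈ V₁ := h₁.isOpen_V.eventually_mem hy₁
    filter_upwards [hU, hV] with y h1 h2
    refine ⟨h1, ?_⟩
    have : φ₁ y ∈ φ₁ '' V₁ := mem_image_of_mem _ h2
    rw [h₁.image_eq] at this
    exact this.2
  have ev2 : ∀ᶠ y in nhds y₁, s y ∈ V₂ ∧ φ₂ (s y) = φ₁ y := by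
    filter_upwards [ev1] with y hy
    have : φ₁ y ∈ φ₂ '' V₂ := by rw [h₂.image_eq]; exact hy
    obtain ⟨z, hz, hz2⟩ := this
    have : s y = z := by rw [hsdef]; simp only; rw [← hz2, hψ z hz]
    rw [this]; exact ⟨hz, hz2⟩
  have hsy₁ : s y₁ = y₂ := by
    rw [hsdef]; simp only; rw [e₁, ← e₂, hψ y₂ hy₂]
  have hpmem : φ₁ y₁ ∈ U₂ ∩ M := by
    refine ⟨hpU₂, ?_⟩
    rw [e₁, ← e₂]
    have : φ₂ y₂ ∈ φ₂ '' V₂ := mem_image_of_mem _ hy₂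
    rw [h₂.image_eq] at this; exact this.2
  have hstend : Filter.Tendsto s (nhds y₁) (nhds y₂) := by
    have h1 : Filter.Tendsto φ₁ (nhds y₁) (nhdsWithin (φ₁ y₁) (U₂ ∩ M)) := by
      rw [tendsto_nhdsWithin_iff]
      exact ⟨hφ₁c.tendsto, ev1⟩
    have h2 : Filter.Tendsto ψ (nhdsWithin (φ₁ y₁) (U₂ ∩ M)) (nhds (ψ (φ₁ y₁))) :=
      (hψcont (φ₁ y₁) hpmem).tendsto
    have := h2.comp h1
    rw [show ψ (φ₁ y₁) = y₂ by rw [e₁, ← e₂, hψ y₂ hy₂]] at this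
    exact this
  have ev3 : ∀ᶠ y in nhds y₁, G (P (φ₁ y)) = s y := by
    have h1 : ∀ᶠ y in nhds y₁, G (g (s y)) = s y := hstend.eventually hleft
    filter_upwards [h1, ev2] with y hy1 hy2
    rw [← hy1, hgdef]; simp only; rw [hy2.2]
  have hgy₂ : g y₂ = P (φ₁ y₁) := by rw [hgdef]; simp only; rw [e₂, ← e₁]
  have hGdiff : DifferentiableAt ℝ G (P (φ₁ y₁)) := by
    rw [← hgy₂]; exact hGat.differentiableAt (zero_lt_one.trans_le hkE).ne'
  have hφ₁diff : DifferentiableAt ℝ φ₁ y₁ := hφ₁at.differentiableAt (zero_lt_one.trans_le hkE).ne'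
  set A₁ := fderiv ℝ φ₁ y₁ with hA₁def
  have hτ : HasFDerivAt (fun y => G (P (φ₁ y)))
      ((fderiv ℝ G (P (φ₁ y₁))).comp (P.comp A₁)) y₁ := by
    exact hGdiff.hasFDerivAt.comp y₁ (P.hasFDerivAt.comp y₁ hφ₁diff.hasFDerivAt)
  set B := (fderiv ℝ G (P (φ₁ y₁))).comp (P.comp A₁) with hBdef
  have hsd : HasFDerivAt s B y₁ := hτ.congr_of_eventuallyEq (ev3.mono fun y hy => hy.symm)
  have hA' : HasFDerivAt φ₂ A (s y₁) := by rw [hsy₁]; exact hA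
  have hcomp : HasFDerivAt (fun y => φ₂ (s y)) (A.comp B) y₁ := hA'.comp y₁ hsd
  have hφ₁' : HasFDerivAt φ₁ (A.comp B) y₁ :=
    hcomp.congr_of_eventuallyEq (ev2.mono fun y hy => hy.2.symm)
  have heq : A₁ = A.comp B := hφ₁'.fderiv
  rw [heq]
  rintro v ⟨u, rfl⟩
  exact ⟨B u, rfl⟩

lemma tangentSet_subset {H : Type*} [NormedAddCommGroup H] [InnerProductSpace ℝ H]
    {k m : ℕ} (hk : 1 ≤ k) {M : Set H} {p : H}
    {V : Set (EuclideanSpace ℝ (Fin m))} {φ : EuclideanSpace ℝ (Fin m) → H} {U : Set H}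
    (hP : IsParametrization k M p V φ U) {y : EuclideanSpace ℝ (Fin m)} (hy : y ∈ V)
    (hφy : φ y = p) : TangentSet k m M p ⊆ Set.range (fderiv ℝ φ y) := by
  rintro v ⟨V₂, φ₂, U₂, hP₂, y₂, hy₂, he₂, hvr⟩
  exact range_fderiv_subset hk hP₂ hP hy₂ hy he₂ hφy hvr

lemma local_line {H : Type*} [NormedAddCommGroup H] [InnerProductSpace ℝ H]
    {k m : ℕ} (hk : 1 ≤ k) {M : Set H} (hM : IsSubmanifold k m M) {p : H} (hp : p ∈ M)
    {v : H} (hv : ∀ q ∈ M, v ∈ TangentSet k m M q) :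
    ∀ᶠ t in nhds (0:ℝ), p + t • v ∈ M := by
  have hkE : (1 : WithTop ℕ∞) ≤ (k : WithTop ℕ∞) := by exact_mod_cast hk
  obtain ⟨V, φ, U, hP⟩ := hM.2 p hp
  have hpUM : p ∈ U ∩ M := ⟨hP.h₀_mem_U, hp⟩
  have : p ∈ φ '' V := by rw [hP.image_eq]; exact hpUM
  obtain ⟨y₀, hy₀, hφy₀⟩ := this
  have hφat : ContDiffAt ℝ k φ y₀ := hP.contDiffOn.contDiffAt (hP.isOpen_V.mem_nhds hy₀)
  have hφdiff : DifferentiableAt ℝ φ y₀ := hφat.differentiableAt (zero_lt_one.trans_le hkE).ne'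
  set A₀ := fderiv ℝ φ y₀ with hA₀def
  have hA₀ : HasFDerivAt φ A₀ y₀ := hφdiff.hasFDerivAt
  obtain ⟨P, hPA⟩ := exists_left_inverse A₀ (hP.fderiv_injective y₀ hy₀)
  set g : EuclideanSpace ℝ (Fin m) → EuclideanSpace ℝ (Fin m) := fun y => P (φ y) with hgdef
  have hgat : ContDiffAt ℝ k g y₀ := P.contDiff.contDiffAt.comp y₀ hφat
  have hPAid : P.comp A₀ = ContinuousLinearMap.id ℝ _ := by
    ext x; simp [hPA]
  have hg' : HasFDerivAt g ((ContinuousLinearEquiv.refl ℝ (EuclideanSpace ℝ (Fin m)) :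
      EuclideanSpace ℝ (Fin m) ≃L[ℝ] EuclideanSpace ℝ (Fin m)) :
      EuclideanSpace ℝ (Fin m) →L[ℝ] EuclideanSpace ℝ (Fin m)) y₀ := by
    have := P.hasFDerivAt.comp y₀ hA₀
    rw [hPAid] at this; exact this
  have hs : HasStrictFDerivAt g ((ContinuousLinearEquiv.refl ℝ (EuclideanSpace ℝ (Fin m)) :
      EuclideanSpace ℝ (Fin m) ≃L[ℝ] EuclideanSpace ℝ (Fin m)) :
      EuclideanSpace ℝ (Fin m) →L[ℝ] EuclideanSpace ℝ (Fin m)) y₀ :=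
    hgat.hasStrictFDerivAt' hg' (zero_lt_one.trans_le hkE).ne'
  set G := hs.localInverse g _ y₀ with hGdef
  have hGat : ContDiffAt ℝ k G (g y₀) := hgat.to_localInverse hg' (zero_lt_one.trans_le hkE).ne'
  -- the curve
  set w : ℝ → EuclideanSpace ℝ (Fin m) := fun t => g y₀ + t • (P v) with hwdef
  set y : ℝ → EuclideanSpace ℝ (Fin m) := fun t => G (w t) with hydef
  set c : ℝ → H := fun t => φ (y t) with hcdef
  have hw0 : w 0 = g y₀ := by simp [hwdef]
  have hwc : Continuous w := continuous_const.add (continuous_id.smul continuous_const)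
  have hwt : Filter.Tendsto w (nhds 0) (nhds (g y₀)) := by
    have := hwc.tendsto (0:ℝ); rwa [hw0] at this
  have hy0 : y 0 = y₀ := by
    rw [hydef]; simp only; rw [hw0]; exact hs.localInverse_apply_image
  have hc0 : c 0 = p := by rw [hcdef]; simp only; rw [hy0, hφy₀]
  have hyt : Filter.Tendsto y (nhds 0) (nhds y₀) := by
    have h1 := hs.localInverse_continuousAt.tendsto.comp hwt
    rwa [hs.localInverse_apply_image] at h1
  -- eventual properties
  have E1 : ∀ᶠ t in nhds (0:ℝ), y t ∈ V := hyt.eventually (hP.isOpen_V.eventually_mem hy₀)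
  have E2 : ∀ᶠ t in nhds (0:ℝ), g (y t) = w t := hwt.eventually hs.eventually_right_inverse
  have E3 : ∀ᶠ t in nhds (0:ℝ), ContDiffAt ℝ k G (w t) := hwt.eventually (hGat.eventually (by simp))
  have E4 : ∀ᶠ t in nhds (0:ℝ), IsUnit (fderiv ℝ g (y t)) := by
    have hgV : ContDiffOn ℝ k g V := P.contDiff.comp_contDiffOn hP.contDiffOn
    have hfc : ContinuousOn (fderiv ℝ g) V := hgV.continuousOn_fderiv_of_isOpen hP.isOpen_V hkE
    have hfca : ContinuousAt (fderiv ℝ g) y₀ :=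
      hfc.continuousAt (hP.isOpen_V.mem_nhds hy₀)
    have h1 : IsUnit (fderiv ℝ g y₀) := by
      rw [hg'.fderiv]
      have : ((ContinuousLinearEquiv.refl ℝ (EuclideanSpace ℝ (Fin m)) :
          EuclideanSpace ℝ (Fin m) ≃L[ℝ] EuclideanSpace ℝ (Fin m)) :
          EuclideanSpace ℝ (Fin m) →L[ℝ] EuclideanSpace ℝ (Fin m))
          = (1 : EuclideanSpace ℝ (Fin m) →L[ℝ] EuclideanSpace ℝ (Fin m)) := by
        ext x; simp
      rw [this]; exact isUnit_one
    have h2 : ∀ᶠ z in nhds y₀, IsUnit (fderiv ℝ g z) :=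
      hfca.eventually_mem (Units.isOpen.mem_nhds h1)
    exact hyt.eventually h2
  have E6 : ∀ᶠ t in nhds (0:ℝ), ContDiffAt ℝ k φ (y t) := by
    filter_upwards [E1] with t ht
    exact hP.contDiffOn.contDiffAt (hP.isOpen_V.mem_nhds ht)
  have E5 : ∀ᶠ t in nhds (0:ℝ), φ (y t) ∈ M ∧ v ∈ Set.range (fderiv ℝ φ (y t)) := by
    filter_upwards [E1] with t ht
    have hmem : φ (y t) ∈ U ∩ M := by rw [← hP.image_eq]; exact mem_image_of_mem _ ht
    have hP' : IsParametrization k M (φ (y t)) V φ U :=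
      ⟨hP.isOpen_U, hmem.1, hP.isOpen_V, hP.contDiffOn, hP.image_eq, hP.injOn,
        hP.exists_contInv, hP.fderiv_injective⟩
    exact ⟨hmem.2, tangentSet_subset hk hP' ht rfl (hv _ hmem.2)⟩
  obtain ⟨ε, hε, hball⟩ := Metric.eventually_nhds_iff.mp (E1.and (E2.and (E3.and (E4.and (E5.and E6)))))
  have hmemball : ∀ t ∈ Metric.ball (0:ℝ) ε, y t ∈ V ∧ g (y t) = w t ∧ ContDiffAt ℝ k G (w t)
      ∧ IsUnit (fderiv ℝ g (y t)) ∧ (φ (y t) ∈ M ∧ v ∈ Set.range (fderiv ℝ φ (y t)))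
      ∧ ContDiffAt ℝ k φ (y t) := fun t ht => hball (by simpa [Real.dist_eq] using ht)
  -- derivative of c is v on the ball
  have key : ∀ t ∈ Metric.ball (0:ℝ) ε, HasDerivAt c v t := by
    intro t ht
    obtain ⟨htV, hgy, hGc, hunit, ⟨hcM, hvr⟩, hφc⟩ := hmemball t ht
    have hφd : HasFDerivAt φ (fderiv ℝ φ (y t)) (y t) :=
      (hφc.differentiableAt (zero_lt_one.trans_le hkE).ne').hasFDerivAt
    have hGd : HasFDerivAt G (fderiv ℝ G (w t)) (w t) :=
      (hGc.differentiableAt (zero_lt_one.trans_le hkE).ne').hasFDerivAt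
    have hwd : HasDerivAt w (P v) t := by
      have := ((hasDerivAt_id t).smul_const (P v)).const_add (g y₀)
      rw [one_smul] at this; exact this
    have hyd : HasDerivAt y ((fderiv ℝ G (w t)) (P v)) t := hGd.comp_hasDerivAt t hwd
    have hcd : HasDerivAt c ((fderiv ℝ φ (y t)) ((fderiv ℝ G (w t)) (P v))) t :=
      hφd.comp_hasDerivAt t hyd
    -- P ∘ c = w on the ball
    have hPc_eq : ∀ s ∈ Metric.ball (0:ℝ) ε, P (c s) = w s := by
      intro s hsmem
      obtain ⟨_, hgy', _⟩ := hmemball s hsmem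
      rw [hcdef]; simp only
      rw [show P (φ (y s)) = g (y s) from rfl, hgy']
    have hEq : (fun s => P (c s)) =ᶠ[nhds t] w :=
      Filter.eventuallyEq_of_mem (Metric.isOpen_ball.mem_nhds ht) hPc_eq
    have hPcd : HasDerivAt (fun s => P (c s)) (P v) t := (hwd.congr_of_eventuallyEq hEq)
    have hPcd2 : HasDerivAt (fun s => P (c s))
        (P ((fderiv ℝ φ (y t)) ((fderiv ℝ G (w t)) (P v)))) t :=
      P.hasFDerivAt.comp_hasDerivAt t hcd
    have huniq : P ((fderiv ℝ φ (y t)) ((fderiv ℝ G (w t)) (P v))) = P v := hPcd2.unique hPcd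
    obtain ⟨u, hu⟩ := hvr
    have hgfd : fderiv ℝ g (y t) = P.comp (fderiv ℝ φ (y t)) := by
      have : HasFDerivAt g (P.comp (fderiv ℝ φ (y t))) (y t) := P.hasFDerivAt.comp (y t) hφd
      exact this.fderiv
    have hginj : Function.Injective (P.comp (fderiv ℝ φ (y t))) := by
      rw [← hgfd]; exact isUnit_clm_injective hunit
    have hu' : (fderiv ℝ G (w t)) (P v) = u := by
      apply hginj
      show P ((fderiv ℝ φ (y t)) _) = P ((fderiv ℝ φ (y t)) _)
      rw [huniq, hu]
    rw [show (fderiv ℝ φ (y t)) ((fderiv ℝ G (w t)) (P v)) = v by rw [hu', hu]] at hcd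
    exact hcd
  -- c t = p + t • v on the ball
  refine Metric.eventually_nhds_iff.mpr ⟨ε, hε, fun t ht => ?_⟩
  have htball : t ∈ Metric.ball (0:ℝ) ε := by simpa [Real.dist_eq] using ht
  have h0ball : (0:ℝ) ∈ Metric.ball (0:ℝ) ε := Metric.mem_ball_self hε
  set f : ℝ → H := fun s => c s - s • v with hfdef
  have hfd : ∀ x ∈ Metric.ball (0:ℝ) ε, HasFDerivWithinAt f
      (0 : ℝ →L[ℝ] H) (Metric.ball (0:ℝ) ε) x := by
    intro x hx
    have h1 : HasDerivAt f 0 x := by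
      have := (key x hx).sub ((hasDerivAt_id x).smul_const v)
      rw [one_smul, sub_self] at this; exact this
    have h2 : HasFDerivAt f ((1 : ℝ →L[ℝ] ℝ).smulRight (0:H)) x := h1
    have h3 : ((1 : ℝ →L[ℝ] ℝ).smulRight (0:H)) = (0 : ℝ →L[ℝ] H) := by ext z; simp
    rw [h3] at h2
    exact h2.hasFDerivWithinAt
  have hle := (convex_ball (0:ℝ) ε).norm_image_sub_le_of_norm_hasFDerivWithin_le
    hfd (fun x _ => norm_zero.le) h0ball htball
  have hft : f t = f 0 := by
    have : ‖f t - f 0‖ ≤ 0 := by simpa using hle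
    have := norm_le_zero_iff.mp this
    exact sub_eq_zero.mp this
  have hf0 : f 0 = p := by rw [hfdef]; simp only; rw [hc0]; simp
  have hct : c t = p + t • v := by
    have h : c t - t • v = p := by rw [← hf0]; exact hft
    have h2 := sub_eq_iff_eq_add'.mp h
    rw [h2, add_comm]
  rw [← hct]
  exact ((hmemball t htball).2.2.2.2.1).1

end Aux

/-- if `M` is closed and `L ⊆ T_h M` for all `h ∈ M`, then `M = M + L`
(Proposition A.9 (1)). -/
theorem stmt3 {H : Type*} [NormedAddCommGroup H] [InnerProductSpace ℝ H] [CompleteSpace H]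
    (k m : ℕ) (hk : 1 ≤ k) (hm : 1 ≤ m) (M : Set H) (hM : IsSubmanifold k m M)
    (hMclosed : IsClosed M) (L : Submodule ℝ H) [FiniteDimensional ℝ L]
    (htang : ∀ h ∈ M, (L : Set H) ⊆ TangentSet k m M h) :
    M = M + (L : Set H) := by
  apply Set.Subset.antisymm
  · intro x hx
    have := Set.add_mem_add hx L.zero_mem
    simpa using this
  · rintro x hx
    rw [Set.mem_add] at hx
    obtain ⟨a, ha, b, hb, rfl⟩ := hx
    have hvt : ∀ q ∈ M, b ∈ TangentSet k m M q := fun q hq => htang q hq hb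
    set S : Set ℝ := {t | a + t • b ∈ M} with hSdef
    have hS0 : (0:ℝ) ∈ S := by simp [hSdef, ha]
    have hSclosed : IsClosed S := by
      have : S = (fun t : ℝ => a + t • b) ⁻¹' M := rfl
      rw [this]
      exact hMclosed.preimage (continuous_const.add (continuous_id.smul continuous_const))
    have hSopen : IsOpen S := by
      rw [isOpen_iff_mem_nhds]
      intro t₀ ht₀
      have hev := local_line hk hM ht₀ hvt
      have htend : Filter.Tendsto (fun t : ℝ => t - t₀) (nhds t₀) (nhds 0) := by
        have := (continuous_id.sub (continuous_const : Continuous fun _ : ℝ => t₀)).tendsto t₀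
        rw [Pi.sub_apply, id_eq, sub_self] at this; exact this
      have := htend.eventually hev
      refine this.mono fun t htm => ?_
      have : a + t₀ • b + (t - t₀) • b = a + t • b := by
        rw [sub_smul]; abel
      rwa [this] at htm
    have hSuniv : S = Set.univ := (IsClopen.eq_univ ⟨hSclosed, hSopen⟩ ⟨0, hS0⟩)
    have h1 : (1:ℝ) ∈ S := by rw [hSuniv]; trivial
    simpa [hSdef] using h1
end
end

section
/- Let H be a real Hilbert space, k ≥ 1 and m ≥ 1 integers, and let M be an m-dimensional C^k-submanifold of H that is closed as a subset of H. Let L ⊆ H be a finite-dimensional linear subspace such that L ⊆ T_h M for all h ∈ M. Then the set N := Π_{L^⊥}(M) is a C^k-submanifold of L^⊥ of dimension dim M − dim L, and M = N + L. -/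
open Set Pointwise Filter Topology

set_option linter.unusedSectionVars false
set_option maxHeartbeats 1000000

noncomputable section

section Pack
variable {H : Type*} [NormedAddCommGroup H] [InnerProductSpace ℝ H] [CompleteSpace H]

structure Pack (k m : ℕ) (M : Set H) (h' : H) where
  T : Submodule ℝ H
  P : H →L[ℝ] H
  ρ : H → H
  W : Set H
  Wbig : Set H
  fd : FiniteDimensional ℝ T
  frank : Module.finrank ℝ T = m
  hPmem : ∀ u, P u ∈ T
  hPorth : ∀ u, u - P u ∈ Tᗮ
  openW : IsOpen W
  openWbig : IsOpen Wbig
  WsubWbig : W ⊆ Wbig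
  memW : h' ∈ W
  smooth : ContDiffOn ℝ k ρ Wbig
  fixed : ∀ h ∈ M ∩ W, ρ h = h
  mapsM : ∀ h ∈ Wbig, ρ h ∈ M
  mapsW : ∀ h ∈ W, ρ h ∈ W
  dep : ∀ u u', P u = P u' → ρ u = ρ u'
  projfix : ∀ h ∈ Wbig, P (ρ h) = P h
  rangeD : Set.range (fderiv ℝ ρ h') ⊆ (T : Set H)

variable {k m : ℕ} {M : Set H} {h' : H}

theorem Pack.fderiv_fix (p : Pack k m M h') (hk : 1 ≤ k)
    {h v : H} (hh : h ∈ p.W) (hv : v ∈ TangentSet k m M (p.ρ h)) :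
    fderiv ℝ p.ρ h v = v := by
  have hk' : (k : WithTop ℕ∞) ≠ 0 := by exact_mod_cast (show k ≠ 0 by omega)
  have hρW : p.ρ h ∈ p.W := p.mapsW h hh
  have hρWbig : p.ρ h ∈ p.Wbig := p.WsubWbig hρW
  have hDρ : DifferentiableAt ℝ p.ρ (p.ρ h) :=
    (p.smooth.contDiffAt (p.openWbig.mem_nhds hρWbig)).differentiableAt hk'
  obtain ⟨V', φ', U', par, y', hy', hφy', hvmem⟩ := hv
  obtain ⟨u, hu⟩ := hvmem
  have hφcont : ContinuousAt φ' y' :=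
    par.contDiffOn.continuousOn.continuousAt (par.isOpen_V.mem_nhds hy')
  have hWev : ∀ᶠ z in 𝓝 y', φ' z ∈ p.W :=
    hφcont.preimage_mem_nhds (p.openW.mem_nhds (by rw [hφy']; exact hρW))
  have hVev : ∀ᶠ z in 𝓝 y', z ∈ V' := par.isOpen_V.mem_nhds hy'
  have hMev : ∀ z ∈ V', φ' z ∈ M := fun z hz => by
    have : φ' z ∈ U' ∩ M := par.image_eq ▸ Set.mem_image_of_mem φ' hz
    exact this.2
  have heq : (fun z => p.ρ (φ' z)) =ᶠ[𝓝 y'] φ' := by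
    filter_upwards [hWev, hVev] with z h1 h2
    exact p.fixed _ ⟨hMev z h2, h1⟩
  have hDφ' : DifferentiableAt ℝ φ' y' :=
    (par.contDiffOn.contDiffAt (par.isOpen_V.mem_nhds hy')).differentiableAt hk'
  have hcomp : fderiv ℝ (p.ρ ∘ φ') y' = (fderiv ℝ p.ρ (p.ρ h)).comp (fderiv ℝ φ' y') := by
    rw [fderiv_comp y' (by rw [hφy']; exact hDρ) hDφ', hφy']
  have h5 : fderiv ℝ (p.ρ ∘ φ') y' = fderiv ℝ φ' y' := heq.fderiv_eq
  have h7 : fderiv ℝ p.ρ (p.ρ h) v = v := by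
    have := congrArg (fun (L : _ →L[ℝ] H) => L u) (hcomp.symm.trans h5)
    simpa [hu] using this
  set c := p.ρ h - h with hc
  have hfun : (fun w => p.ρ (w + c)) = p.ρ := funext fun w => p.dep _ _ (by
    rw [map_add, hc, map_sub, p.projfix h (p.WsubWbig hh)]
    abel_nf)
  have hadd : h + c = p.ρ h := by rw [hc]; abel
  have h8 : HasFDerivAt p.ρ (fderiv ℝ p.ρ (p.ρ h)) h := by
    have h9 : HasFDerivAt (fun w : H => w + c) (ContinuousLinearMap.id ℝ H) h := by
      simpa using (hasFDerivAt_id h).add_const c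
    have h10 : HasFDerivAt p.ρ (fderiv ℝ p.ρ (p.ρ h)) (h + c) := hadd ▸ hDρ.hasFDerivAt
    have h11 := h10.comp h h9
    rw [ContinuousLinearMap.comp_id] at h11
    have hfe : p.ρ ∘ (fun w : H => w + c) = p.ρ := by
      funext w; exact congrFun hfun w
    rwa [hfe] at h11
  rw [h8.fderiv]
  exact h7


theorem Pack.P_eq_self (p : Pack k m M h') {x : H} (hx : x ∈ p.T) : p.P x = x := by
  have h1 : x - p.P x ∈ p.T ⊓ p.Tᗮ := ⟨Submodule.sub_mem _ hx (p.hPmem x), p.hPorth x⟩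
  rw [p.T.orthogonal_disjoint.eq_bot, Submodule.mem_bot, sub_eq_zero] at h1
  exact h1.symm

theorem Pack.P_inner (p : Pack k m M h') (u w : H) :
    inner ℝ (p.P u) w = (inner ℝ u (p.P w) : ℝ) := by
  have h1 : (inner ℝ (p.P u) (w - p.P w) : ℝ) = 0 :=
    (Submodule.mem_orthogonal _ _).mp (p.hPorth w) _ (p.hPmem u)
  have h2 : (inner ℝ (u - p.P u) (p.P w) : ℝ) = 0 := by
    rw [real_inner_comm]
    exact (Submodule.mem_orthogonal _ _).mp (p.hPorth u) _ (p.hPmem w)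
  have e1 : (inner ℝ (p.P u) w : ℝ) = inner ℝ (p.P u) (p.P w) := by
    have := inner_sub_right (𝕜 := ℝ) (p.P u) w (p.P w)
    rw [h1] at this
    linarith [this]
  have e2 : (inner ℝ u (p.P w) : ℝ) = inner ℝ (p.P u) (p.P w) := by
    have := inner_sub_left (𝕜 := ℝ) u (p.P u) (p.P w)
    rw [h2] at this
    linarith [this]
  rw [e1, e2]

theorem exists_pack (hk : 1 ≤ k) (hM : IsSubmanifold k m M) (hh' : h' ∈ M) :
    Nonempty (Pack k m M h') := by
  have hk' : (k : WithTop ℕ∞) ≠ 0 := by exact_mod_cast (show k ≠ 0 by omega)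
  obtain ⟨V, φ, U, par⟩ := hM.2 h' hh'
  obtain ⟨y₀, hy₀V, hφy₀⟩ : ∃ y₀ ∈ V, φ y₀ = h' := by
    have : h' ∈ φ '' V := par.image_eq ▸ ⟨par.h₀_mem_U, hh'⟩
    exact this
  set D := fderiv ℝ φ y₀ with hD
  have hDinj : Function.Injective D := par.fderiv_injective y₀ hy₀V
  set T : Submodule ℝ H := LinearMap.range (D : EuclideanSpace ℝ (Fin m) →ₗ[ℝ] H) with hT
  haveI hfd : FiniteDimensional ℝ T := by
    apply Module.Finite.range
  have hfrank : Module.finrank ℝ T = m := by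
    have hinj : Function.Injective (D : EuclideanSpace ℝ (Fin m) →ₗ[ℝ] H) := hDinj
    rw [hT, LinearMap.finrank_range_of_inj hinj, finrank_euclideanSpace_fin]
  haveI : CompleteSpace T := FiniteDimensional.complete ℝ T
  set pr : H →L[ℝ] T := Submodule.orthogonalProjection T with hpr
  set F : EuclideanSpace ℝ (Fin m) → T := fun y => pr (φ y) with hF
  set A : EuclideanSpace ℝ (Fin m) →L[ℝ] T := pr.comp D with hA
  have hDT : ∀ u, D u ∈ T := fun u => LinearMap.mem_range_self _ u
  have hprD : ∀ u, ((pr (D u) : T) : H) = D u := fun u =>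
    Submodule.starProjection_eq_self_iff.mpr (hDT u)
  have hAinj : Function.Injective A := by
    intro a b hab
    apply hDinj
    have := congrArg (fun t : T => (t : H)) hab
    simpa [hA, hprD] using this
  have hAsurj : Function.Surjective A := by
    rintro ⟨w, hw⟩
    obtain ⟨u, hu⟩ := hw
    refine ⟨u, Subtype.ext ?_⟩
    simp only [hA, ContinuousLinearMap.coe_comp', Function.comp_apply]
    rw [hprD]; exact hu
  set Aeq : EuclideanSpace ℝ (Fin m) ≃L[ℝ] T :=
    LinearEquiv.toContinuousLinearEquiv
      (LinearEquiv.ofBijective (A : EuclideanSpace ℝ (Fin m) →ₗ[ℝ] T) ⟨hAinj, hAsurj⟩) with hAeq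
  have hAcoe : ((Aeq : EuclideanSpace ℝ (Fin m) →L[ℝ] T)) = A := by
    ext u; rfl
  have hφCD : ContDiffAt ℝ k φ y₀ := par.contDiffOn.contDiffAt (par.isOpen_V.mem_nhds hy₀V)
  have hDφdiff : DifferentiableAt ℝ φ y₀ := hφCD.differentiableAt hk'
  have hDφ : HasFDerivAt φ D y₀ := hDφdiff.hasFDerivAt
  have hFCD : ContDiffAt ℝ k F y₀ := (pr.contDiff.contDiffAt).comp y₀ hφCD
  have hFd : HasFDerivAt F ((Aeq : EuclideanSpace ℝ (Fin m) →L[ℝ] T)) y₀ := by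
    rw [hAcoe]
    exact pr.hasFDerivAt.comp y₀ hDφ
  set Finv : T → EuclideanSpace ℝ (Fin m) := hFCD.localInverse hFd hk' with hFinv
  have hS : HasStrictFDerivAt F ((Aeq : EuclideanSpace ℝ (Fin m) →L[ℝ] T)) y₀ :=
    hFCD.hasStrictFDerivAt' hFd hk'
  have hx₀ : Finv (F y₀) = y₀ := hFCD.localInverse_apply_image hFd hk'
  have hFinvCD : ContDiffAt ℝ k Finv (F y₀) := hFCD.to_localInverse hFd hk'
  obtain ⟨O₁, hO₁nhds, hO₁cd⟩ : ∃ u ∈ 𝓝 (F y₀), ContDiffOn ℝ k Finv u := by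
    refine hFinvCD.contDiffOn le_rfl ?_
    intro hcon
    exact absurd hcon (by simp)
  have hO₂ : {x : T | F (Finv x) = x} ∈ 𝓝 (F y₀) := hS.eventually_right_inverse
  have hO₃ : {x : T | Finv x ∈ V} ∈ 𝓝 (F y₀) := by
    have hcont : ContinuousAt Finv (F y₀) := hFinvCD.continuousAt
    exact hcont.preimage_mem_nhds (par.isOpen_V.mem_nhds (by rw [hx₀]; exact hy₀V))
  obtain ⟨O, hOsub, hOopen, hOmem⟩ :=
    mem_nhds_iff.mp (Filter.inter_mem (Filter.inter_mem hO₁nhds hO₂) hO₃)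
  have hOcd : ContDiffOn ℝ k Finv O := hO₁cd.mono (fun x hx => (hOsub hx).1.1)
  have hOright : ∀ x ∈ O, F (Finv x) = x := fun x hx => (hOsub hx).1.2
  have hOV : ∀ x ∈ O, Finv x ∈ V := fun x hx => (hOsub hx).2
  set ρ : H → H := fun h => φ (Finv (pr h)) with hρ
  set Wbig : Set H := pr ⁻¹' O with hWbig
  have hWbigopen : IsOpen Wbig := hOopen.preimage pr.continuous
  have hprh' : pr h' = F y₀ := by rw [← hφy₀]
  have h'Wbig : h' ∈ Wbig := by
    show pr h' ∈ O
    rw [hprh']; exact hOmem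
  have hsmooth : ContDiffOn ℝ k ρ Wbig := by
    have hsm1 : ContDiffOn ℝ k (fun x : T => φ (Finv x)) O :=
      par.contDiffOn.comp hOcd (fun x hx => hOV x hx)
    exact hsm1.comp (pr.contDiff.contDiffOn) (fun h hh => hh)
  have hmapsM : ∀ h ∈ Wbig, ρ h ∈ M := by
    intro h hh
    have : φ (Finv (pr h)) ∈ U ∩ M := par.image_eq ▸ Set.mem_image_of_mem φ (hOV _ hh)
    exact this.2
  set P : H →L[ℝ] H := T.subtypeL.comp pr with hP
  have hdep : ∀ u u', P u = P u' → ρ u = ρ u' := by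
    intro u u' huu
    have : pr u = pr u' := Subtype.coe_injective huu
    simp only [hρ, this]
  have hprojfix : ∀ h ∈ Wbig, P (ρ h) = P h := by
    intro h hh
    have : pr (ρ h) = pr h := by
      show pr (φ (Finv (pr h))) = pr h
      exact hOright _ hh
    simp only [hP, ContinuousLinearMap.coe_comp', Function.comp_apply, this]
  -- the fixed-point neighborhood
  obtain ⟨ψ, hψc, hψ⟩ := par.exists_contInv
  obtain ⟨G, hGsub, hGopen, hGmem⟩ : ∃ G ⊆ {y | Finv (F y) = y}, IsOpen G ∧ y₀ ∈ G :=
    mem_nhds_iff.mp hS.eventually_left_inverse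
  have hψy₀ : ψ h' = y₀ := by rw [← hφy₀]; exact hψ y₀ hy₀V
  have hψG : ψ ⁻¹' G ∈ 𝓝[U ∩ M] h' := by
    have hcw : ContinuousWithinAt ψ (U ∩ M) h' := hψc h' ⟨par.h₀_mem_U, hh'⟩
    exact hcw (hGopen.mem_nhds (by rw [hψy₀]; exact hGmem))
  obtain ⟨W₂, hW₂o, hW₂mem, hW₂sub⟩ := mem_nhdsWithin.mp hψG
  set W₀ : Set H := Wbig ∩ U ∩ W₂ with hW₀
  have hW₀open : IsOpen W₀ := ((hWbigopen.inter par.isOpen_U).inter hW₂o)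
  have hW₀mem : h' ∈ W₀ := ⟨⟨h'Wbig, par.h₀_mem_U⟩, hW₂mem⟩
  have hfixed₀ : ∀ h ∈ M ∩ W₀, ρ h = h := by
    rintro h ⟨hhM, ⟨hhWbig, hhU⟩, hhW₂⟩
    obtain ⟨y, hyV, hφy⟩ : h ∈ φ '' V := par.image_eq ▸ ⟨hhU, hhM⟩
    have hψh : ψ h = y := by rw [← hφy]; exact hψ y hyV
    have hyG : y ∈ G := by
      rw [← hψh]
      exact hW₂sub ⟨hhW₂, hhU, hhM⟩
    have hFy : Finv (F y) = y := hGsub hyG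
    have hprh : pr h = F y := by rw [← hφy]
    show φ (Finv (pr h)) = h
    rw [hprh, hFy, hφy]
  have hWopen' : IsOpen (Wbig ∩ ρ ⁻¹' W₀) :=
    hsmooth.continuousOn.isOpen_inter_preimage hWbigopen hW₀open
  set W : Set H := W₀ ∩ (Wbig ∩ ρ ⁻¹' W₀) with hW
  have hρh' : ρ h' = h' := hfixed₀ h' ⟨hh', hW₀mem⟩
  have hWmem : h' ∈ W := ⟨hW₀mem, h'Wbig, by simp only [Set.mem_preimage, hρh']; exact hW₀mem⟩
  have hWsub : W ⊆ Wbig := fun h hh => hh.1.1.1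
  have hmapsW : ∀ h ∈ W, ρ h ∈ W := by
    rintro h ⟨hhW₀, hhWbig, hhρ⟩
    have h1 : ρ h ∈ W₀ := hhρ
    have h2 : ρ h ∈ Wbig := by
      show pr (ρ h) ∈ O
      have : pr (ρ h) = pr h := Subtype.coe_injective (by
        have := hprojfix h hhWbig
        simpa [hP] using this)
      rw [this]; exact hhWbig
    have h3 : ρ (ρ h) = ρ h := hdep _ _ (hprojfix h hhWbig)
    exact ⟨h1, h2, by simp only [Set.mem_preimage, h3]; exact h1⟩
  -- range of derivative at h'
  have hFinvd : DifferentiableAt ℝ Finv (F y₀) := hFinvCD.differentiableAt hk'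
  have hgd : DifferentiableAt ℝ (fun h => Finv (pr h)) h' := by
    have h1 : DifferentiableAt ℝ Finv (pr h') := by rw [hprh']; exact hFinvd
    exact h1.comp h' pr.differentiableAt
  have hgy₀ : (fun h => Finv (pr h)) h' = y₀ := by
    show Finv (pr h') = y₀
    rw [hprh']; exact hx₀
  have hrangeD : Set.range (fderiv ℝ ρ h') ⊆ (T : Set H) := by
    have hDg : fderiv ℝ ρ h' =
        (fderiv ℝ φ y₀).comp (fderiv ℝ (fun h => Finv (pr h)) h') := by
      have := fderiv_comp (𝕜 := ℝ) h'
        (g := φ) (f := fun h => Finv (pr h))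
        (by rw [show Finv (pr h') = y₀ from hgy₀]; exact hDφdiff) hgd
      rw [← hgy₀]
      exact this
    rintro w ⟨u, hu⟩
    rw [hDg] at hu
    exact ⟨fderiv ℝ (fun h => Finv (pr h)) h' u, by simpa using hu⟩
  exact ⟨{
    T := T, P := P, ρ := ρ, W := W, Wbig := Wbig, fd := hfd, frank := hfrank
    hPmem := fun u => (pr u).2
    hPorth := fun u => Submodule.sub_starProjection_mem_orthogonal u
    openW := (hW₀open.inter hWopen'), openWbig := hWbigopen
    WsubWbig := hWsub, memW := hWmem, smooth := hsmooth
    fixed := fun h hh => hfixed₀ h ⟨hh.1, hh.2.1⟩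
    mapsM := hmapsM, mapsW := hmapsW, dep := hdep, projfix := hprojfix
    rangeD := hrangeD }⟩


theorem line_mem (hk : 1 ≤ k) (hM : IsSubmanifold k m M) (hMclosed : IsClosed M)
    {v : H} (hv : ∀ h ∈ M, v ∈ TangentSet k m M h) :
    ∀ h' ∈ M, ∀ t : ℝ, h' + t • v ∈ M := by
  intro h' hh' t
  have hk' : (k : WithTop ℕ∞) ≠ 0 := by exact_mod_cast (show k ≠ 0 by omega)
  set S : Set ℝ := {s | h' + s • v ∈ M} with hSdef
  have hclosed : IsClosed S := hMclosed.preimage (by fun_prop)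
  have h0 : (0 : ℝ) ∈ S := by simp [hSdef, hh']
  have hopen : IsOpen S := by
    rw [Metric.isOpen_iff]
    intro t₀ ht₀
    set h'' := h' + t₀ • v with hh''
    obtain ⟨p⟩ := exists_pack hk hM (ht₀ : h'' ∈ M)
    obtain ⟨ε₁, hε₁pos, hball⟩ := Metric.isOpen_iff.mp p.openW _ p.memW
    set ε := ε₁ / (‖v‖ + 1) with hε
    have hεpos : 0 < ε := div_pos hε₁pos (by positivity)
    refine ⟨ε, hεpos, fun t' ht' => ?_⟩
    have hmemW : ∀ s : ℝ, |s| < ε → h'' + s • v ∈ p.W := by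
      intro s hs
      apply hball
      rw [Metric.mem_ball, dist_eq_norm]
      have he : h'' + s • v - h'' = s • v := by abel
      rw [he, norm_smul, Real.norm_eq_abs]
      calc |s| * ‖v‖ ≤ |s| * (‖v‖ + 1) := by nlinarith [abs_nonneg s, norm_nonneg v]
        _ < ε * (‖v‖ + 1) := by
            apply mul_lt_mul_of_pos_right hs (by positivity)
        _ = ε₁ := by
            rw [hε]; field_simp
    set g : ℝ → H := fun s => p.ρ (h'' + s • v) - s • v with hg
    have hgd : ∀ s ∈ Metric.ball (0 : ℝ) ε, HasDerivAt g 0 s := by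
      intro s hs
      have hsabs : |s| < ε := by simpa [Real.dist_eq] using hs
      have hsW : h'' + s • v ∈ p.W := hmemW s hsabs
      have hDρ : DifferentiableAt ℝ p.ρ (h'' + s • v) :=
        (p.smooth.contDiffAt (p.openWbig.mem_nhds (p.WsubWbig hsW))).differentiableAt hk'
      have hline : HasDerivAt (fun s : ℝ => h'' + s • v) v s := by
        simpa using ((hasDerivAt_id s).smul_const v).const_add h''
      have h1 : HasDerivAt (fun s : ℝ => p.ρ (h'' + s • v))
          (fderiv ℝ p.ρ (h'' + s • v) v) s :=
        hDρ.hasFDerivAt.comp_hasDerivAt s hline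
      have h2 : fderiv ℝ p.ρ (h'' + s • v) v = v :=
        p.fderiv_fix hk hsW (hv _ (p.mapsM _ (p.WsubWbig hsW)))
      have h3 : HasDerivAt (fun s : ℝ => s • v) v s := by
        simpa using (hasDerivAt_id s).smul_const v
      have := h1.sub h3
      rw [h2, sub_self] at this
      exact this
    have hconst : ∀ s ∈ Metric.ball (0 : ℝ) ε, g s = g 0 := by
      intro s hs
      apply (convex_ball (0 : ℝ) ε).is_const_of_fderivWithin_eq_zero (𝕜 := ℝ) (f := g)
        ?_ ?_ hs (Metric.mem_ball_self hεpos)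
      · intro x hx
        exact (hgd x hx).differentiableAt.differentiableWithinAt
      · intro x hx
        rw [fderivWithin_of_isOpen Metric.isOpen_ball hx, (hgd x hx).hasFDerivAt.fderiv]
        ext
        simp
    have hfix : g 0 = h'' := by
      have : p.ρ h'' = h'' := p.fixed h'' ⟨ht₀, p.memW⟩
      simp [hg, this]
    have hkey : h'' + (t' - t₀) • v ∈ M := by
      have hs : (t' - t₀) ∈ Metric.ball (0 : ℝ) ε := by
        simpa [Real.dist_eq] using ht'
      have h4 := (hconst _ hs).trans hfix
      have h5 : p.ρ (h'' + (t' - t₀) • v) = h'' + (t' - t₀) • v := by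
        rw [hg] at h4
        simp only at h4
        have h6 := sub_eq_iff_eq_add.mp h4
        exact h6
      rw [← h5]
      exact p.mapsM _ (p.WsubWbig (hmemW _ (by simpa [Real.dist_eq] using hs)))
    have : h' + t' • v = h'' + (t' - t₀) • v := by
      rw [hh'', sub_smul]; abel
    rw [hSdef]
    simp only [Set.mem_setOf_eq]
    rw [this]
    exact hkey
  have huniv : S = Set.univ := IsClopen.eq_univ ⟨hclosed, hopen⟩ ⟨0, h0⟩
  have : t ∈ S := huniv ▸ Set.mem_univ t
  exact this

end Pack


/-- if `M` is closed and `L ⊆ T_h M` for all `h ∈ M`, then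
`N := Π_{L^⊥}(M)` is a `C^k`-submanifold of `L^⊥` of dimension `dim M - dim L`
and `M = N + L` (Proposition A.9 (2)). -/
theorem stmt4 {H : Type*} [NormedAddCommGroup H] [InnerProductSpace ℝ H] [CompleteSpace H]
    (k m : ℕ) (hk : 1 ≤ k) (hm : 1 ≤ m) (M : Set H) (hM : IsSubmanifold k m M)
    (hMclosed : IsClosed M) (L : Submodule ℝ H) [FiniteDimensional ℝ L]
    (htang : ∀ h ∈ M, (L : Set H) ⊆ TangentSet k m M h) :
    IsSubmanifold k (m - Module.finrank ℝ L) ((Submodule.orthogonalProjection Lᗮ) '' M) ∧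
    M = (Subtype.val '' ((Submodule.orthogonalProjection Lᗮ) '' M) : Set H) + (L : Set H) := by
  have hk' : (k : WithTop ℕ∞) ≠ 0 := by exact_mod_cast (show k ≠ 0 by omega)
  haveI : CompleteSpace L := FiniteDimensional.complete ℝ L
  set N : Set Lᗮ := (Submodule.orthogonalProjection Lᗮ) '' M with hN
  have hinv : ∀ h ∈ M, ∀ v ∈ L, ∀ t : ℝ, h + t • v ∈ M := by
    intro h hh v hv t
    exact line_mem hk hM hMclosed (fun h'' hh'' => htang h'' hh'' hv) h hh t
  have hval : ∀ u : H, ((Submodule.orthogonalProjection Lᗮ u : H)) = u - Submodule.orthogonalProjection L u :=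
    fun u => Submodule.starProjection_orthogonal_val u
  have hNchar : ∀ n : Lᗮ, n ∈ N ↔ (n : H) ∈ M := by
    intro n
    constructor
    · rintro ⟨h, hh, rfl⟩
      rw [hval h]
      have := hinv h hh (Submodule.orthogonalProjection L h) (SetLike.coe_mem _) (-1)
      simpa [sub_eq_add_neg] using this
    · intro hn
      exact ⟨(n : H), hn, Submodule.orthogonalProjection_mem_subspace_eq_self n⟩
  have hsum : M = (Subtype.val '' N : Set H) + (L : Set H) := by
    ext h
    constructor
    · intro hh
      rw [Set.mem_add]
      refine ⟨((Submodule.orthogonalProjection Lᗮ h : H)),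
        Set.mem_image_of_mem _ (Set.mem_image_of_mem _ hh),
        (Submodule.orthogonalProjection L h : H), SetLike.coe_mem _, ?_⟩
      rw [hval h]
      abel
    · intro hh
      rw [Set.mem_add] at hh
      obtain ⟨a, ha, b, hb, rfl⟩ := hh
      obtain ⟨n, hn, rfl⟩ := ha
      have h1 : (n : H) ∈ M := (hNchar n).mp hn
      have := hinv _ h1 b hb 1
      simpa using this
  refine ⟨⟨hM.1.image _, ?_⟩, hsum⟩
  intro n₀ hn₀
  have hh₀M : ((n₀ : H)) ∈ M := (hNchar n₀).mp hn₀
  set h₀ : H := (n₀ : H) with hh₀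
  obtain ⟨p⟩ := exists_pack hk hM hh₀M
  haveI : FiniteDimensional ℝ p.T := p.fd
  have hLT : L ≤ p.T := by
    intro v hv
    have hρ₀ : p.ρ h₀ = h₀ := p.fixed h₀ ⟨hh₀M, p.memW⟩
    have h1 : fderiv ℝ p.ρ h₀ v = v :=
      p.fderiv_fix hk p.memW (by rw [hρ₀]; exact htang h₀ hh₀M hv)
    exact p.rangeD ⟨v, h1⟩
  set T' : Submodule ℝ H := Lᗮ ⊓ p.T with hT'
  haveI : FiniteDimensional ℝ T' := Submodule.finiteDimensional_of_le inf_le_right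
  haveI : CompleteSpace T' := FiniteDimensional.complete ℝ T'
  have hfr : Module.finrank ℝ T' = m - Module.finrank ℝ L := by
    have hsum2 := Submodule.finrank_add_inf_finrank_orthogonal (K₁ := L) (K₂ := p.T) hLT
    rw [p.frank, ← hT'] at hsum2
    omega
  set ι : EuclideanSpace ℝ (Fin (m - Module.finrank ℝ L)) ≃ₗᵢ[ℝ] T' :=
    ((stdOrthonormalBasis ℝ T').reindex (finCongr hfr)).repr.symm with hι
  set ιL : EuclideanSpace ℝ (Fin (m - Module.finrank ℝ L)) →L[ℝ] H :=
    T'.subtypeL.comp ι.toLinearIsometry.toContinuousLinearMap with hιL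
  have hιL_apply : ∀ z, ιL z = ((ι z : T') : H) := fun z => rfl
  have hιL_mem : ∀ z, ιL z ∈ T' := fun z => (ι z).2
  have hιL_norm : ∀ z, ‖ιL z‖ = ‖z‖ := fun z => by
    calc ‖ιL z‖ = ‖ι z‖ := rfl
      _ = ‖z‖ := ι.norm_map z
  have hT'L : T' ≤ Lᗮ := inf_le_left
  have hT'T : T' ≤ p.T := inf_le_right
  have hTperp : p.Tᗮ ≤ T'ᗮ := Submodule.orthogonal_le hT'T
  have hLperp : L ≤ T'ᗮ :=
    le_trans (Submodule.le_orthogonal_orthogonal L) (Submodule.orthogonal_le hT'L)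
  obtain ⟨ε₁, hε₁pos, hball₁⟩ := Metric.isOpen_iff.mp p.openW h₀ p.memW
  have hρ₀ : p.ρ h₀ = h₀ := p.fixed h₀ ⟨hh₀M, p.memW⟩
  set Φ : EuclideanSpace ℝ (Fin (m - Module.finrank ℝ L)) → Lᗮ :=
    fun z => Submodule.orthogonalProjection Lᗮ (p.ρ (h₀ + ιL z)) with hΦ
  have hmemW₁ : ∀ z : EuclideanSpace ℝ (Fin (m - Module.finrank ℝ L)), ‖z‖ < ε₁ → h₀ + ιL z ∈ p.W := by
    intro z hz
    apply hball₁
    rw [Metric.mem_ball, dist_eq_norm]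
    simpa [add_sub_cancel_left, hιL_norm z] using hz
  have hΦHcont : ContinuousOn (fun z => ((Φ z : H))) (Metric.ball 0 ε₁) := by
    have h1 : Continuous (fun z : EuclideanSpace ℝ (Fin (m - Module.finrank ℝ L)) => h₀ + ιL z) :=
      continuous_const.add ιL.continuous
    have h2 : ContinuousOn (fun z => p.ρ (h₀ + ιL z)) (Metric.ball 0 ε₁) :=
      p.smooth.continuousOn.comp h1.continuousOn
        (fun z hz => p.WsubWbig (hmemW₁ z (by simpa [mem_ball_zero_iff] using hz)))
    exact (continuous_subtype_val.comp (Submodule.orthogonalProjection Lᗮ).continuous).comp_continuousOn h2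
  have hΦ0 : ((Φ 0 : H)) = h₀ := by
    have hι0 : ιL 0 = 0 := map_zero ιL
    simp only [hΦ, hι0, add_zero, hρ₀]
    exact Submodule.starProjection_eq_self_iff.mpr (SetLike.coe_mem n₀)
  obtain ⟨ε₂, hε₂pos, hball₂⟩ : ∃ ε₂ > 0, ∀ z : EuclideanSpace ℝ (Fin (m - Module.finrank ℝ L)),
      ‖z‖ < ε₂ → ((Φ z : H)) ∈ p.W := by
    have hca : ContinuousAt (fun z => ((Φ z : H))) 0 :=
      hΦHcont.continuousAt (Metric.isOpen_ball.mem_nhds (Metric.mem_ball_self hε₁pos))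
    have hmem := hca.preimage_mem_nhds (p.openW.mem_nhds (by rw [hΦ0]; exact p.memW))
    obtain ⟨r, hrpos, hrball⟩ := Metric.mem_nhds_iff.mp hmem
    exact ⟨r, hrpos, fun z hz => hrball (by simpa [mem_ball_zero_iff] using hz)⟩
  set ε := min ε₁ ε₂ with hε
  have hεpos : 0 < ε := lt_min hε₁pos hε₂pos
  set B : Set (EuclideanSpace ℝ (Fin (m - Module.finrank ℝ L))) := Metric.ball 0 ε with hB
  have hBW : ∀ z ∈ B, h₀ + ιL z ∈ p.W := fun z hz =>
    hmemW₁ z (lt_of_lt_of_le (mem_ball_zero_iff.mp hz) (min_le_left _ _))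
  have keyP : ∀ z, h₀ + ιL z ∈ p.W → p.P (p.ρ (h₀ + ιL z)) = p.P h₀ + ιL z := by
    intro z hz
    rw [p.projfix _ (p.WsubWbig hz), map_add, p.P_eq_self (hT'T (hιL_mem z))]
  have keyT' : ∀ z, h₀ + ιL z ∈ p.W →
      ((Submodule.orthogonalProjection T' (((Φ z : H)) - h₀) : T') : H) = ιL z := by
    intro z hz
    set u := p.ρ (h₀ + ιL z) with hu
    have hΦz : ((Φ z : H)) = u - (Submodule.orthogonalProjection L u : H) := hval u
    refine Submodule.eq_starProjection_of_mem_orthogonal' (hιL_mem z)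
      (z := (u - p.P u) + (p.P h₀ - h₀) - (Submodule.orthogonalProjection L u : H)) ?_ ?_
    · refine Submodule.sub_mem _ (Submodule.add_mem _ ?_ ?_) ?_
      · exact hTperp (p.hPorth u)
      · have h3 := Submodule.neg_mem _ (hTperp (p.hPorth h₀))
        rwa [neg_sub] at h3
      · exact hLperp (SetLike.coe_mem _)
    · rw [hΦz, keyP z hz]
      abel
  set Ψ : Lᗮ → EuclideanSpace ℝ (Fin (m - Module.finrank ℝ L)) :=
    fun n => ι.symm (Submodule.orthogonalProjection T' ((n : H) - h₀)) with hΨ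
  have hΨcont : Continuous Ψ := by
    apply ι.symm.continuous.comp
    exact (Submodule.orthogonalProjection T').continuous.comp
      (continuous_subtype_val.sub continuous_const)
  have hΨΦ : ∀ z, h₀ + ιL z ∈ p.W → Ψ (Φ z) = z := by
    intro z hz
    have h1 : Submodule.orthogonalProjection T' (((Φ z : H)) - h₀) = ι z :=
      Subtype.ext (keyT' z hz)
    show ι.symm (Submodule.orthogonalProjection T' (((Φ z : H)) - h₀)) = z
    rw [h1]
    exact ι.symm_apply_apply z
  set Uset : Set Lᗮ := {n : Lᗮ | (n : H) ∈ p.W ∧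
    ‖Submodule.orthogonalProjection T' ((n : H) - h₀)‖ < ε} with hUset
  have hUopen : IsOpen Uset := by
    have heq : Uset = (Subtype.val ⁻¹' p.W) ∩
        ((fun n : Lᗮ => ‖Submodule.orthogonalProjection T' ((n : H) - h₀)‖) ⁻¹' (Set.Iio ε)) := rfl
    rw [heq]
    refine (p.openW.preimage continuous_subtype_val).inter (isOpen_Iio.preimage ?_)
    exact ((Submodule.orthogonalProjection T').continuous.comp
      (continuous_subtype_val.sub continuous_const)).norm
  have hΦcd : ContDiffOn ℝ k Φ B := by
    have h1 : ContDiff ℝ k (fun z : EuclideanSpace ℝ (Fin (m - Module.finrank ℝ L)) => h₀ + ιL z) :=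
      contDiff_const.add ιL.contDiff
    have h2 : ContDiffOn ℝ k (fun z => p.ρ (h₀ + ιL z)) B :=
      p.smooth.comp h1.contDiffOn (fun z hz => p.WsubWbig (hBW z hz))
    exact (Submodule.orthogonalProjection Lᗮ).contDiff.comp_contDiffOn h2
  have himage : Φ '' B = Uset ∩ N := by
    apply Set.Subset.antisymm
    · rintro _ ⟨z, hz, rfl⟩
      have hz' : ‖z‖ < ε := mem_ball_zero_iff.mp hz
      have hzW : h₀ + ιL z ∈ p.W := hBW z hz
      refine ⟨⟨hball₂ z (lt_of_lt_of_le hz' (min_le_right _ _)), ?_⟩, ?_⟩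
      · have h1 : Submodule.orthogonalProjection T' (((Φ z : H)) - h₀) = ι z :=
          Subtype.ext (keyT' z hzW)
        rw [h1]
        calc ‖ι z‖ = ‖z‖ := ι.norm_map z
          _ < ε := hz'
      · exact ⟨p.ρ (h₀ + ιL z), p.mapsM _ (p.WsubWbig hzW), rfl⟩
    · rintro n ⟨⟨hnW, hnnorm⟩, hnN⟩
      have hnM : (n : H) ∈ M := (hNchar n).mp hnN
      set xH : H := p.P (n : H) - p.P h₀ with hxH
      have hxT : xH ∈ p.T := Submodule.sub_mem _ (p.hPmem _) (p.hPmem _)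
      have hw : ((n : H) - h₀) ∈ Lᗮ :=
        Submodule.sub_mem _ (SetLike.coe_mem n) (SetLike.coe_mem n₀)
      have hxL : xH ∈ Lᗮ := by
        rw [Submodule.mem_orthogonal]
        intro u hu
        have hxHP : xH = p.P ((n : H) - h₀) := by rw [map_sub]
        rw [hxHP, ← p.P_inner u ((n : H) - h₀), p.P_eq_self (hLT hu)]
        exact (Submodule.mem_orthogonal _ _).mp hw u hu
      have hxT' : xH ∈ T' := Submodule.mem_inf.mpr ⟨hxL, hxT⟩
      have hproj : ((Submodule.orthogonalProjection T' ((n : H) - h₀) : T') : H) = xH := by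
        refine Submodule.eq_starProjection_of_mem_orthogonal' hxT'
          (z := ((n : H) - h₀) - p.P ((n : H) - h₀)) (hTperp (p.hPorth _)) ?_
        rw [hxH, map_sub]
        abel
      have hxnorm : ‖xH‖ < ε := by
        have h2 : ‖Submodule.orthogonalProjection T' ((n : H) - h₀)‖ = ‖xH‖ := by
          rw [← hproj]; rfl
        rwa [h2] at hnnorm
      set z := ι.symm ⟨xH, hxT'⟩ with hz
      have hιz : ιL z = xH := by
        rw [hιL_apply, hz, ι.apply_symm_apply]
      have hznorm : ‖z‖ < ε := by
        have : ‖z‖ = ‖xH‖ := by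
          rw [← hιz, hιL_norm]
        rwa [this]
      have hzB : z ∈ B := mem_ball_zero_iff.mpr hznorm
      have hzW : h₀ + ιL z ∈ p.W := hBW z hzB
      have hdepz : p.ρ (h₀ + ιL z) = p.ρ (n : H) := by
        apply p.dep
        rw [map_add, hιz, p.P_eq_self hxT, hxH]
        abel
      refine ⟨z, hzB, ?_⟩
      show Submodule.orthogonalProjection Lᗮ (p.ρ (h₀ + ιL z)) = n
      rw [hdepz, p.fixed _ ⟨hnM, hnW⟩]
      exact Submodule.orthogonalProjection_mem_subspace_eq_self n
  have hinjOn : Set.InjOn Φ B := by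
    intro a ha b hb hab
    have h1 := hΨΦ a (hBW a ha)
    have h2 := hΨΦ b (hBW b hb)
    rw [← h1, ← h2, hab]
  have hΨdiff : Differentiable ℝ Ψ := by
    have f1 : Differentiable ℝ (fun n : Lᗮ => (n : H)) := fun n =>
      (Lᗮ.subtypeL.differentiable).differentiableAt
    have f2 : Differentiable ℝ (fun n : Lᗮ => (n : H) - h₀) := f1.sub_const h₀
    have f3 : Differentiable ℝ (fun n : Lᗮ => Submodule.orthogonalProjection T' ((n : H) - h₀)) :=
      (Submodule.orthogonalProjection T').differentiable.comp f2
    exact ι.symm.toLinearIsometry.toContinuousLinearMap.differentiable.comp f3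
  have hfderiv : ∀ z ∈ B, Function.Injective (fderiv ℝ Φ z) := by
    intro z hz a b hab
    have hΦd : DifferentiableAt ℝ Φ z :=
      (hΦcd.contDiffAt (Metric.isOpen_ball.mem_nhds hz)).differentiableAt hk'
    have hev : (fun w => Ψ (Φ w)) =ᶠ[𝓝 z] id :=
      Filter.eventuallyEq_of_mem (Metric.isOpen_ball.mem_nhds hz)
        (fun w hw => hΨΦ w (hBW w hw))
    have h1 : fderiv ℝ (fun w => Ψ (Φ w)) z = ContinuousLinearMap.id ℝ _ := by
      rw [hev.fderiv_eq, fderiv_id]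
    have h2 : fderiv ℝ (fun w => Ψ (Φ w)) z = (fderiv ℝ Ψ (Φ z)).comp (fderiv ℝ Φ z) :=
      fderiv_comp z (hΨdiff _) hΦd
    have hid : ∀ u, fderiv ℝ Ψ (Φ z) (fderiv ℝ Φ z u) = u := fun u => by
      have h3 := congrArg (fun (LL : _ →L[ℝ] _) => LL u) (h2.symm.trans h1)
      simpa using h3
    calc a = fderiv ℝ Ψ (Φ z) (fderiv ℝ Φ z a) := (hid a).symm
      _ = fderiv ℝ Ψ (Φ z) (fderiv ℝ Φ z b) := by rw [hab]
      _ = b := hid b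
  refine ⟨B, Φ, Uset, ?_⟩
  exact {
    isOpen_U := hUopen
    h₀_mem_U := ⟨p.memW, by simp [hεpos, hh₀]⟩
    isOpen_V := Metric.isOpen_ball
    contDiffOn := hΦcd
    image_eq := himage
    injOn := hinjOn
    exists_contInv := ⟨Ψ, hΨcont.continuousOn, fun z hz => hΨΦ z (hBW z hz)⟩
    fderiv_injective := hfderiv }
end
end

section
/- Let H be a real Hilbert space, let M ⊆ H be a nonempty subset that is closed as a subset of H, and let L ⊆ H be a linear subspace. Suppose that for every h₀ ∈ M there exists an open neighborhood U ⊆ H of h₀ such that U ∩ M = U ∩ ((U ∩ M) + L). Then M + L ⊆ M. -/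
open Set Pointwise

noncomputable section

open Topology

section LocallyInvariant

variable {E : Type*} [AddCommGroup E] [Module ℝ E] [TopologicalSpace E] [ContinuousAdd E]
  [ContinuousSMul ℝ E] {M : Set E} {L : Submodule ℝ E}

theorem isOpen_setOf_add_smul_mem
    (hloc : ∀ x ∈ M, ∃ U ∈ 𝓝 x, U ∩ (U ∩ M + (L : Set E)) ⊆ M) (x : E) {v : E} (hv : v ∈ L) :
    IsOpen {t : ℝ | x + t • v ∈ M} := by
  refine isOpen_iff_mem_nhds.2 fun t ht => ?_
  obtain ⟨U, hU, hUM⟩ := hloc _ ht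
  have hcont : Continuous fun s : ℝ => x + s • v := by fun_prop
  filter_upwards [hcont.continuousAt.preimage_mem_nhds hU] with s hs
  have hshift : x + s • v = (x + t • v) + (s - t) • v := by module
  refine hUM ⟨hs, ?_⟩
  rw [hshift]
  exact add_mem_add ⟨mem_of_mem_nhds hU, ht⟩ (L.smul_mem _ hv)

/-- Along every line `x + ℝ v` with `v ∈ L`, membership in `M` is a clopen condition. -/
theorem add_submodule_subset_of_isClosed (hM : IsClosed M)
    (hloc : ∀ x ∈ M, ∃ U ∈ 𝓝 x, U ∩ (U ∩ M + (L : Set E)) ⊆ M) :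
    M + (L : Set E) ⊆ M := by
  rintro _ ⟨x, hx, v, hv, rfl⟩
  have hclopen : IsClopen {t : ℝ | x + t • v ∈ M} :=
    ⟨hM.preimage (by fun_prop), isOpen_setOf_add_smul_mem hloc x hv⟩
  have huniv := hclopen.eq_univ ⟨0, by simpa using hx⟩
  have hone : (1 : ℝ) ∈ {t : ℝ | x + t • v ∈ M} := huniv ▸ mem_univ 1
  simpa using hone

end LocallyInvariant

theorem stmt6_general {H : Type*} [NormedAddCommGroup H] [InnerProductSpace ℝ H]
    (M : Set H) (hMclosed : IsClosed M) (L : Submodule ℝ H)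
    (hloc : ∀ h₀ ∈ M, ∃ U : Set H, IsOpen U ∧ h₀ ∈ U ∧
      U ∩ M = U ∩ ((U ∩ M) + (L : Set H))) :
    M + (L : Set H) ⊆ M := by
  refine add_submodule_subset_of_isClosed hMclosed fun x hx => ?_
  obtain ⟨U, hU, hxU, hUM⟩ := hloc x hx
  exact ⟨U, hU.mem_nhds hxU, hUM ▸ inter_subset_right⟩

/-- if `M` is nonempty, closed, and locally satisfies
`U ∩ M = U ∩ ((U ∩ M) + L)`, then `M + L ⊆ M`. -/
theorem stmt6 {H : Type*} [NormedAddCommGroup H] [InnerProductSpace ℝ H] [CompleteSpace H]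
    (M : Set H) (hne : M.Nonempty) (hMclosed : IsClosed M) (L : Submodule ℝ H)
    (hloc : ∀ h₀ ∈ M, ∃ U : Set H, IsOpen U ∧ h₀ ∈ U ∧
      U ∩ M = U ∩ ((U ∩ M) + (L : Set H))) :
    M + (L : Set H) ⊆ M :=
  stmt6_general M hMclosed L hloc
end
end

section
/- Let H be a real Hilbert space, k ≥ 1 and m ≥ 1 integers, M an m-dimensional C^k-submanifold of H, and h₀ ∈ M with fl M(h₀) = d. Let L₁, L₂ ⊆ H be d-dimensional linear subspaces and let U ⊆ H be an open neighborhood of h₀ such that L₁ ⊆ T_h M and L₂ ⊆ T_h M for all h ∈ U ∩ M. Then L₁ = L₂. -/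
open Set Pointwise

noncomputable section

open Topology Filter in
lemma key {H : Type*} [NormedAddCommGroup H] [InnerProductSpace ℝ H] [CompleteSpace H]
    {k m : ℕ} (hk : 1 ≤ k) {M : Set H} {h h' : H}
    {V V' : Set (EuclideanSpace ℝ (Fin m))} {φ φ' : EuclideanSpace ℝ (Fin m) → H}
    {U U' : Set H}
    (p : IsParametrization k M h V φ U) (p' : IsParametrization k M h' V' φ' U')
    {y y' : EuclideanSpace ℝ (Fin m)} (hy : y ∈ V) (hy' : y' ∈ V')
    (heq : φ y = φ' y') :
    Set.range (fderiv ℝ φ y) ⊆ Set.range (fderiv ℝ φ' y') := by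
  have hk' : (1 : WithTop ℕ∞) ≤ (k : WithTop ℕ∞) := by exact_mod_cast hk
  -- the derivative A of φ' at y' and a continuous left inverse B
  set A : EuclideanSpace ℝ (Fin m) →L[ℝ] H := fderiv ℝ φ' y' with hA
  have hAinj : Function.Injective A := p'.fderiv_injective y' hy'
  set K : Submodule ℝ H := LinearMap.range (A : EuclideanSpace ℝ (Fin m) →ₗ[ℝ] H) with hK
  have hKfin : FiniteDimensional ℝ K := inferInstance
  let e : EuclideanSpace ℝ (Fin m) ≃ₗ[ℝ] K := LinearEquiv.ofInjective (A : EuclideanSpace ℝ (Fin m) →ₗ[ℝ] H) hAinj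
  let B : H →L[ℝ] EuclideanSpace ℝ (Fin m) :=
    (LinearMap.toContinuousLinearMap (e.symm : K →ₗ[ℝ] EuclideanSpace ℝ (Fin m))).comp (K.orthogonalProjectionOnto)
  have hBA : ∀ v : EuclideanSpace ℝ (Fin m), B (A v) = v := by
    intro v
    have hmem : A v ∈ K := LinearMap.mem_range_self _ v
    have : K.orthogonalProjectionOnto (A v) = ⟨A v, hmem⟩ :=
      Submodule.orthogonalProjectionOnto_mem_subspace_eq_self ⟨A v, hmem⟩
    simp only [B, ContinuousLinearMap.comp_apply, this]
    have : e v = ⟨A v, hmem⟩ := by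
      ext; exact LinearEquiv.ofInjective_apply (f := (A : EuclideanSpace ℝ (Fin m) →ₗ[ℝ] H)) v
    rw [LinearMap.coe_toContinuousLinearMap']
    rw [show (⟨A v, hmem⟩ : K) = e v from this.symm]
    simp
  -- φ' is ContDiffAt y'
  have hφ'cd : ContDiffAt ℝ k φ' y' := p'.contDiffOn.contDiffAt (p'.isOpen_V.mem_nhds hy')
  have hφcd : ContDiffAt ℝ k φ y := p.contDiffOn.contDiffAt (p.isOpen_V.mem_nhds hy)
  -- F = B ∘ φ' has invertible strict derivative at y'
  set F : EuclideanSpace ℝ (Fin m) → EuclideanSpace ℝ (Fin m) := fun x => B (φ' x) with hF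
  have hFcd : ContDiffAt ℝ k F y' := B.contDiff.contDiffAt.comp y' hφ'cd
  have hφ'strict : HasStrictFDerivAt φ' A y' := hφ'cd.hasStrictFDerivAt (by exact_mod_cast (show k ≠ 0 by omega))
  have hFstrict : HasStrictFDerivAt F ((ContinuousLinearEquiv.refl ℝ (EuclideanSpace ℝ (Fin m))) :
      EuclideanSpace ℝ (Fin m) →L[ℝ] EuclideanSpace ℝ (Fin m)) y' := by
    have : HasStrictFDerivAt F (B.comp A) y' :=
      (B.hasStrictFDerivAt).comp y' hφ'strict
    convert this using 1
    ext v
    simp [hBA v]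
  -- local inverse of F
  set Finv := hFstrict.localInverse F _ y' with hFinv
  obtain ⟨ψ', hψ'cont, hψ'inv⟩ := p'.exists_contInv
  have hh'mem : φ' y' ∈ U' ∩ M := by
    rw [← p'.image_eq]; exact Set.mem_image_of_mem _ hy'
  -- transition map
  set τ : EuclideanSpace ℝ (Fin m) → EuclideanSpace ℝ (Fin m) := fun x => ψ' (φ x) with hτ
  have hτy : τ y = y' := by simp [τ, heq, hψ'inv y' hy']
  set W : Set (EuclideanSpace ℝ (Fin m)) := V ∩ φ ⁻¹' U' with hW
  have hWopen : IsOpen W :=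
    p.contDiffOn.continuousOn.isOpen_inter_preimage p.isOpen_V p'.isOpen_U
  have hyW : y ∈ W := ⟨hy, by rw [Set.mem_preimage, heq]; exact hh'mem.1⟩
  have hWnhds : W ∈ 𝓝 y := hWopen.mem_nhds hyW
  have hmaps : ∀ x ∈ W, τ x ∈ V' ∧ φ' (τ x) = φ x := by
    intro x hx
    have hφxM : φ x ∈ U' ∩ M := by
      refine ⟨hx.2, ?_⟩
      have : φ x ∈ φ '' V := Set.mem_image_of_mem _ hx.1
      rw [p.image_eq] at this
      exact this.2
    rw [← p'.image_eq] at hφxM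
    obtain ⟨z, hz, hzeq⟩ := hφxM
    have : τ x = z := by rw [hτ]; simp only [← hzeq, hψ'inv z hz]
    exact ⟨this ▸ hz, by rw [this, hzeq]⟩
  -- τ is continuous at y
  have hφc : ContinuousAt φ y := p.contDiffOn.continuousOn.continuousAt (p.isOpen_V.mem_nhds hy)
  have hτc : ContinuousAt τ y := by
    have h1 : ContinuousWithinAt ψ' (U' ∩ M) (φ y) := by
      rw [heq]; exact hψ'cont.continuousWithinAt hh'mem
    have h2 : ContinuousWithinAt τ W y := by
      refine h1.comp hφc.continuousWithinAt ?_
      intro x hx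
      have := (hmaps x hx)
      have : φ x ∈ φ' '' V' := ⟨τ x, this.1, this.2⟩
      rwa [p'.image_eq] at this
    exact h2.continuousAt hWnhds
  -- eventually τ = Finv ∘ B ∘ φ
  have hleft : ∀ᶠ z in 𝓝 y', Finv (F z) = z := hFstrict.eventually_left_inverse
  have hτtendsto : Filter.Tendsto τ (𝓝 y) (𝓝 y') := hτy ▸ hτc.tendsto
  have hev1 : ∀ᶠ x in 𝓝 y, Finv (F (τ x)) = τ x := hτtendsto.eventually hleft
  have hev : ∀ᶠ x in 𝓝 y, φ x = φ' (Finv (B (φ x))) := by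
    filter_upwards [hev1, hWnhds] with x h1 h2
    have h3 := hmaps x h2
    have h4 : F (τ x) = B (φ x) := by rw [hF]; simp only [h3.2]
    rw [h4] at h1
    rw [h1, h3.2]
  -- G = Finv ∘ B ∘ φ
  set G : EuclideanSpace ℝ (Fin m) → EuclideanSpace ℝ (Fin m) :=
    fun x => Finv (B (φ x)) with hG
  have hGy : G y = y' := by
    have : B (φ y) = F y' := by rw [hF, heq]
    rw [hG]; simp only [this]
    exact hFstrict.localInverse_apply_image
  have hGdiff : DifferentiableAt ℝ G y := by
    have h1 : DifferentiableAt ℝ Finv (B (φ y)) := by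
      have : B (φ y) = F y' := by rw [hF, heq]
      rw [this]
      exact hFstrict.to_localInverse.differentiableAt
    exact h1.comp y (B.differentiableAt.comp y (hφcd.differentiableAt (by exact_mod_cast (show k ≠ 0 by omega))))
  have hφ'diff : DifferentiableAt ℝ φ' (G y) := by
    rw [hGy]; exact hφ'cd.differentiableAt (by exact_mod_cast (show k ≠ 0 by omega))
  have hfeq : fderiv ℝ φ y = (fderiv ℝ φ' y').comp (fderiv ℝ G y) := by
    have h1 : (fun x => φ' (G x)) =ᶠ[𝓝 y] φ := by
      filter_upwards [hev] with x hx using hx.symm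
    rw [← h1.fderiv_eq]
    have := fderiv_comp y hφ'diff hGdiff
    rw [hGy] at this
    exact this
  rw [hfeq]
  rintro v ⟨w, rfl⟩
  exact ⟨fderiv ℝ G y w, rfl⟩

/-- The tangent set is contained in the range of the derivative of any parametrization. -/
lemma TangentSet_subset {H : Type*} [NormedAddCommGroup H] [InnerProductSpace ℝ H]
    [CompleteSpace H] {k m : ℕ} (hk : 1 ≤ k) {M : Set H} {h : H}
    {V : Set (EuclideanSpace ℝ (Fin m))} {φ : EuclideanSpace ℝ (Fin m) → H} {U : Set H}
    (p : IsParametrization k M h V φ U) {y : EuclideanSpace ℝ (Fin m)}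
    (hy : y ∈ V) (hφy : φ y = h)
    {v : H} (hv : ∃ (V' : Set (EuclideanSpace ℝ (Fin m)))
      (φ' : EuclideanSpace ℝ (Fin m) → H) (U' : Set H), IsParametrization k M h V' φ' U' ∧
        ∃ y' ∈ V', φ' y' = h ∧ v ∈ Set.range (fderiv ℝ φ' y')) :
    v ∈ Set.range (fderiv ℝ φ y) := by
  obtain ⟨V', φ', U', p', y', hy', hφy', hv⟩ := hv
  exact key hk p' p hy' hy (hφy'.trans hφy.symm) hv

/-- two `d`-dimensional subspaces contained in all tangent spaces near a
point of flatness `d` coincide. -/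
theorem stmt7 {H : Type*} [NormedAddCommGroup H] [InnerProductSpace ℝ H] [CompleteSpace H]
    (k m : ℕ) (hk : 1 ≤ k) (hm : 1 ≤ m) (M : Set H) (hM : IsSubmanifold k m M)
    (h₀ : H) (h₀M : h₀ ∈ M) (d : ℕ) (hfl : flatnessAt k m M h₀ = d)
    (L₁ L₂ : Submodule ℝ H) [FiniteDimensional ℝ L₁] [FiniteDimensional ℝ L₂]
    (hd₁ : Module.finrank ℝ L₁ = d) (hd₂ : Module.finrank ℝ L₂ = d)
    (U : Set H) (hU : IsOpen U) (h₀U : h₀ ∈ U)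
    (ht₁ : ∀ h ∈ U ∩ M, (L₁ : Set H) ⊆ TangentSet k m M h)
    (ht₂ : ∀ h ∈ U ∩ M, (L₂ : Set H) ⊆ TangentSet k m M h) :
    L₁ = L₂ := by
  classical
  -- for each h ∈ M, choose a parametrization with a preimage point
  have hparam : ∀ h ∈ M, ∃ (V : Set (EuclideanSpace ℝ (Fin m)))
      (φ : EuclideanSpace ℝ (Fin m) → H) (Uh : Set H) (y : EuclideanSpace ℝ (Fin m)),
      IsParametrization k M h V φ Uh ∧ y ∈ V ∧ φ y = h := by
    intro h hh
    obtain ⟨V, φ, Uh, p⟩ := hM.2 h hh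
    have : h ∈ φ '' V := by rw [p.image_eq]; exact ⟨p.h₀_mem_U, hh⟩
    obtain ⟨y, hy, hφy⟩ := this
    exact ⟨V, φ, Uh, y, p, hy, hφy⟩
  -- the sup L = L₁ ⊔ L₂
  set L : Submodule ℝ H := L₁ ⊔ L₂ with hL
  haveI : FiniteDimensional ℝ L := Submodule.finiteDimensional_sup L₁ L₂
  -- key claim: for every h ∈ U ∩ M, TangentSet equals a range, and L is inside it
  have hLrange : ∀ h ∈ U ∩ M, (L : Set H) ⊆ TangentSet k m M h ∧
      ∃ (R : Submodule ℝ H), FiniteDimensional ℝ R ∧ Module.finrank ℝ R ≤ m ∧ L ≤ R := by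
    intro h hh
    obtain ⟨V, φ, Uh, y, p, hy, hφy⟩ := hparam h hh.2
    set R : Submodule ℝ H := LinearMap.range (fderiv ℝ φ y : EuclideanSpace ℝ (Fin m) →ₗ[ℝ] H) with hR
    have hRset : (R : Set H) = Set.range (fderiv ℝ φ y) := LinearMap.coe_range _
    have hTsub : TangentSet k m M h ⊆ (R : Set H) := by
      intro v hv
      rw [hRset]
      exact TangentSet_subset hk p hy hφy hv
    have hL1 : L₁ ≤ R := by
      intro v hv
      exact hTsub (ht₁ h hh hv)
    have hL2 : L₂ ≤ R := by
      intro v hv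
      exact hTsub (ht₂ h hh hv)
    have hLR : L ≤ R := sup_le hL1 hL2
    have hRsub : (R : Set H) ⊆ TangentSet k m M h := by
      intro v hv
      rw [hRset] at hv
      exact ⟨V, φ, Uh, p, y, hy, hφy, hv⟩
    refine ⟨fun v hv => hRsub (hLR hv), R, ?_, ?_, hLR⟩
    · exact LinearMap.finiteDimensional_range _
    · calc Module.finrank ℝ R ≤ Module.finrank ℝ (EuclideanSpace ℝ (Fin m)) :=
            LinearMap.finrank_range_le _
        _ = m := finrank_euclideanSpace_fin
  -- finrank L ≤ m
  obtain ⟨_, R₀, hR₀fin, hR₀m, hLR₀⟩ := hLrange h₀ ⟨h₀U, h₀M⟩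
  haveI := hR₀fin
  have hLm : Module.finrank ℝ L ≤ m :=
    le_trans (Submodule.finrank_mono hLR₀) hR₀m
  -- FlatAt for finrank L
  have hflatL : FlatAt k m M h₀ (Module.finrank ℝ L) :=
    ⟨L, U, rfl, hU, h₀U, fun h hh => (hLrange h hh).1⟩
  -- finrank L ≤ d via sSup
  have hbdd : BddAbove {d | d ≤ m ∧ FlatAt k m M h₀ d} := ⟨m, fun x hx => hx.1⟩
  have hLd : Module.finrank ℝ L ≤ d := by
    rw [← hfl]
    exact le_csSup hbdd ⟨hLm, hflatL⟩
  -- d ≤ finrank L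
  have hdL : d ≤ Module.finrank ℝ L := hd₁ ▸ Submodule.finrank_mono le_sup_left
  have h1 : L₁ = L := Submodule.eq_of_le_of_finrank_le le_sup_left (by omega)
  have h2 : L₂ = L := Submodule.eq_of_le_of_finrank_le le_sup_right (by omega)
  rw [h1, h2]
end
end

section
/- Let H be a real Hilbert space, k ≥ 1 and m ≥ 2 integers, and let M be an m-dimensional C^k-submanifold of H that is closed as a subset of H. Let L ⊆ H be a linear subspace with dim L = m − 1 such that L ⊆ T_h M for all h ∈ M. Then M is a foliation generated by L, i.e. there exists a one-dimensional C^k-submanifold N of L^⊥ with M = N + L. -/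
open Set Pointwise

noncomputable section

section Aux

variable {H : Type*} [NormedAddCommGroup H] [NormedSpace ℝ H]

/-- The image of an open subset of the chart domain is relatively open in `M`. -/
theorem IsParametrization.image_open {E : Type*} [NormedAddCommGroup E] [NormedSpace ℝ E]
    {k : ℕ} {M : Set H} {h₀ : H} {V : Set E} {φ : E → H} {U : Set H}
    (hp : IsParametrization k M h₀ V φ U) {O : Set E} (hO : IsOpen O) (hOV : O ⊆ V) :
    ∃ U₁ : Set H, IsOpen U₁ ∧ φ '' O = U₁ ∩ M := by
  obtain ⟨ψ, hψc, hψ⟩ := hp.exists_contInv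
  obtain ⟨U₂, hU₂, hpre⟩ := continuousOn_iff'.1 hψc O hO
  refine ⟨U ∩ U₂, hp.isOpen_U.inter hU₂, ?_⟩
  have himg : φ '' O = (U ∩ M) ∩ ψ ⁻¹' O := by
    apply subset_antisymm
    · rintro _ ⟨y, hyO, rfl⟩
      refine ⟨hp.image_eq ▸ mem_image_of_mem φ (hOV hyO), ?_⟩
      simp only [mem_preimage, hψ y (hOV hyO)]
      exact hyO
    · rintro x ⟨hx, hxO⟩
      have : x ∈ φ '' V := hp.image_eq ▸ hx
      obtain ⟨y, hyV, rfl⟩ := this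
      exact mem_image_of_mem φ (by rwa [mem_preimage, hψ y hyV] at hxO)
  have h2 := Set.ext_iff.1 hpre
  rw [himg]
  ext x
  have := h2 x
  simp only [mem_inter_iff, mem_preimage] at *
  tauto

/-- A normalized local chart for `M`: `Γ` parametrizes a relatively open piece of `M`
and admits the globally-defined continuous linear left inverse `π`. -/
structure GraphChart (k m : ℕ) (M : Set H) (Γ : EuclideanSpace ℝ (Fin m) → H)
    (π : H →L[ℝ] EuclideanSpace ℝ (Fin m)) (W : Set (EuclideanSpace ℝ (Fin m)))
    (U : Set H) : Prop where
  isOpen_W : IsOpen W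
  isOpen_U : IsOpen U
  contDiffOn : ContDiffOn ℝ k Γ W
  image_eq : Γ '' W = U ∩ M
  proj_eq : ∀ x ∈ W, π (Γ x) = x

namespace GraphChart

variable {k m : ℕ} {M : Set H} {Γ : EuclideanSpace ℝ (Fin m) → H}
  {π : H →L[ℝ] EuclideanSpace ℝ (Fin m)} {W : Set (EuclideanSpace ℝ (Fin m))} {U : Set H}

theorem mem_M (gc : GraphChart k m M Γ π W U) {x} (hx : x ∈ W) : Γ x ∈ M :=
  (gc.image_eq ▸ mem_image_of_mem Γ hx : Γ x ∈ U ∩ M).2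

theorem mem_U (gc : GraphChart k m M Γ π W U) {x} (hx : x ∈ W) : Γ x ∈ U :=
  (gc.image_eq ▸ mem_image_of_mem Γ hx : Γ x ∈ U ∩ M).1

theorem hasFDerivAt (gc : GraphChart k m M Γ π W U) (hk : 1 ≤ k) {x} (hx : x ∈ W) :
    HasFDerivAt Γ (fderiv ℝ Γ x) x :=
  (((gc.contDiffOn.contDiffAt (gc.isOpen_W.mem_nhds hx))).differentiableAt
    (by exact_mod_cast (show k ≠ 0 by omega))).hasFDerivAt

theorem proj_fderiv (gc : GraphChart k m M Γ π W U) (hk : 1 ≤ k) {x} (hx : x ∈ W) (u) :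
    π (fderiv ℝ Γ x u) = u := by
  have h1 : HasFDerivAt (fun y => π (Γ y)) (π.comp (fderiv ℝ Γ x)) x :=
    π.hasFDerivAt.comp x (gc.hasFDerivAt hk hx)
  have h2 : (fun y => π (Γ y)) =ᶠ[nhds x] (id : _ → _) :=
    Filter.eventually_of_mem (gc.isOpen_W.mem_nhds hx) (fun y hy => gc.proj_eq y hy)
  have h3 : HasFDerivAt (id : EuclideanSpace ℝ (Fin m) → EuclideanSpace ℝ (Fin m))
      (π.comp (fderiv ℝ Γ x)) x := h1.congr_of_eventuallyEq h2.symm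
  have h4 := h3.unique (hasFDerivAt_id x)
  calc π (fderiv ℝ Γ x u) = (π.comp (fderiv ℝ Γ x)) u := rfl
    _ = u := by rw [h4]; rfl

theorem fderiv_inj (gc : GraphChart k m M Γ π W U) (hk : 1 ≤ k) {x} (hx : x ∈ W) :
    Function.Injective (fderiv ℝ Γ x) := by
  intro u u' h
  have := congrArg π h
  rwa [gc.proj_fderiv hk hx, gc.proj_fderiv hk hx] at this

/-- Independence of the tangent space from the chart: every tangent vector at `Γ x`
is in the range of `fderiv ℝ Γ x`, with explicit section `π`. -/
theorem tangent_eq (gc : GraphChart k m M Γ π W U) (hk : 1 ≤ k) {x} (hx : x ∈ W)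
    {v : H} (hv : v ∈ TangentSet k m M (Γ x)) : fderiv ℝ Γ x (π v) = v := by
  obtain ⟨V', φ', U', hp', y', hy'V', hφ'y', w, hw⟩ := hv
  have hcφ' : ContinuousAt φ' y' :=
    (hp'.contDiffOn.continuousOn.continuousAt (hp'.isOpen_V.mem_nhds hy'V'))
  have hUnb : U ∈ nhds (φ' y') := by
    rw [hφ'y']; exact gc.isOpen_U.mem_nhds (gc.mem_U hx)
  have h1 : ∀ᶠ y in nhds y', φ' y ∈ U := hcφ'.preimage_mem_nhds hUnb
  have h2 : ∀ᶠ y in nhds y', y ∈ V' := hp'.isOpen_V.mem_nhds hy'V'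
  have hev : ∀ᶠ y in nhds y', Γ (π (φ' y)) = φ' y ∧ π (φ' y) ∈ W := by
    filter_upwards [h1, h2] with y hyU hyV'
    have hyM : φ' y ∈ M := (hp'.image_eq ▸ mem_image_of_mem φ' hyV' : φ' y ∈ U' ∩ M).2
    have : φ' y ∈ Γ '' W := by rw [gc.image_eq]; exact ⟨hyU, hyM⟩
    obtain ⟨z, hzW, hz⟩ := this
    have hπz : π (φ' y) = z := by rw [← hz, gc.proj_eq z hzW]
    rw [hπz]
    exact ⟨hz, hzW⟩
  have hφ'd : DifferentiableAt ℝ φ' y' :=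
    (hp'.contDiffOn.contDiffAt (hp'.isOpen_V.mem_nhds hy'V')).differentiableAt
      (by exact_mod_cast (show k ≠ 0 by omega))
  have hτ : HasFDerivAt (fun y => π (φ' y)) (π.comp (fderiv ℝ φ' y')) y' :=
    π.hasFDerivAt.comp y' hφ'd.hasFDerivAt
  have hτy' : π (φ' y') = x := by rw [hφ'y', gc.proj_eq x hx]
  have hΓd : HasFDerivAt Γ (fderiv ℝ Γ x) (π (φ' y')) := hτy'.symm ▸ gc.hasFDerivAt hk hx
  have hcomp : HasFDerivAt (fun y => Γ (π (φ' y)))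
      ((fderiv ℝ Γ x).comp (π.comp (fderiv ℝ φ' y'))) y' := hΓd.comp y' hτ
  have hφ'' : HasFDerivAt φ' ((fderiv ℝ Γ x).comp (π.comp (fderiv ℝ φ' y'))) y' :=
    hcomp.congr_of_eventuallyEq (hev.mono fun y hy => hy.1.symm)
  have huniq := hφ''.unique hφ'd.hasFDerivAt
  have hvw : fderiv ℝ φ' y' w = v := hw
  have : fderiv ℝ φ' y' w = fderiv ℝ Γ x (π (fderiv ℝ φ' y' w)) := by
    conv_lhs => rw [← huniq]
    rfl
  rw [← hvw]
  exact this.symm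

end GraphChart

end Aux

section Aux2

variable {H : Type*} [NormedAddCommGroup H] [InnerProductSpace ℝ H]

/-- Existence of a normalized chart around every point of a submanifold. -/
theorem exists_graphChart {k m : ℕ} (hk : 1 ≤ k) {M : Set H}
    (hM : IsSubmanifold k m M) {h₀ : H} (hh₀ : h₀ ∈ M) :
    ∃ (Γ : EuclideanSpace ℝ (Fin m) → H) (π : H →L[ℝ] EuclideanSpace ℝ (Fin m))
      (W : Set (EuclideanSpace ℝ (Fin m))) (U : Set H) (x₀ : EuclideanSpace ℝ (Fin m)),
      GraphChart k m M Γ π W U ∧ x₀ ∈ W ∧ Γ x₀ = h₀ := by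
  classical
  obtain ⟨V, φ, U₀, hp⟩ := hM.2 h₀ hh₀
  have hh₀' : h₀ ∈ φ '' V := by rw [hp.image_eq]; exact ⟨hp.h₀_mem_U, hh₀⟩
  obtain ⟨y₀, hy₀V, hφy₀⟩ := hh₀'
  have hkn : (k : WithTop ℕ∞) ≠ 0 := by exact_mod_cast (show k ≠ 0 by omega)
  have hφca : ContDiffAt ℝ k φ y₀ := hp.contDiffOn.contDiffAt (hp.isOpen_V.mem_nhds hy₀V)
  have hφd : DifferentiableAt ℝ φ y₀ := hφca.differentiableAt hkn
  set A : EuclideanSpace ℝ (Fin m) →L[ℝ] H := fderiv ℝ φ y₀ with hA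
  have hAinj : Function.Injective A := hp.fderiv_injective y₀ hy₀V
  set T : Submodule ℝ H := LinearMap.range (A : EuclideanSpace ℝ (Fin m) →ₗ[ℝ] H) with hT
  haveI : FiniteDimensional ℝ T :=
    Module.Finite.range (A : EuclideanSpace ℝ (Fin m) →ₗ[ℝ] H)
  haveI : CompleteSpace T := FiniteDimensional.complete ℝ T
  set eA : EuclideanSpace ℝ (Fin m) ≃ₗ[ℝ] T :=
    LinearEquiv.ofInjective (A : EuclideanSpace ℝ (Fin m) →ₗ[ℝ] H) hAinj with heA
  set eAc : EuclideanSpace ℝ (Fin m) ≃L[ℝ] T := eA.toContinuousLinearEquiv with heAc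
  set π : H →L[ℝ] EuclideanSpace ℝ (Fin m) :=
    (eAc.symm : T →L[ℝ] EuclideanSpace ℝ (Fin m)).comp (Submodule.orthogonalProjectionOnto T) with hπ
  have hπA : ∀ u, π (A u) = u := by
    intro u
    have hmem : A u ∈ T := LinearMap.mem_range_self _ u
    have h1 : Submodule.orthogonalProjectionOnto T (A u) = ⟨A u, hmem⟩ :=
      Submodule.orthogonalProjectionOnto_mem_subspace_eq_self (⟨A u, hmem⟩ : T)
    have h2 : eA u = ⟨A u, hmem⟩ := Subtype.ext (by
      simp only [heA]
      exact LinearEquiv.ofInjective_apply (f := (A : EuclideanSpace ℝ (Fin m) →ₗ[ℝ] H)) u)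
    have h3 : eAc.symm ⟨A u, hmem⟩ = u := by
      rw [← h2]
      have : eAc u = eA u := rfl
      rw [← this]
      exact eAc.symm_apply_apply u
    simp only [hπ, ContinuousLinearMap.coe_comp', Function.comp_apply]
    rw [h1]
    exact h3
  set f : EuclideanSpace ℝ (Fin m) → EuclideanSpace ℝ (Fin m) := fun y => π (φ y) with hf
  have hcf : ContDiffAt ℝ k f y₀ := (π.contDiff.contDiffAt).comp y₀ hφca
  have hfd : HasFDerivAt f (π.comp A) y₀ := π.hasFDerivAt.comp y₀ hφd.hasFDerivAt
  have hid : π.comp A = ContinuousLinearMap.id ℝ (EuclideanSpace ℝ (Fin m)) :=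
    ContinuousLinearMap.ext fun u => by simpa using hπA u
  have hfd' : HasFDerivAt f
      ((ContinuousLinearEquiv.refl ℝ (EuclideanSpace ℝ (Fin m)) :
        EuclideanSpace ℝ (Fin m) ≃L[ℝ] EuclideanSpace ℝ (Fin m)) :
        EuclideanSpace ℝ (Fin m) →L[ℝ] EuclideanSpace ℝ (Fin m)) y₀ := by
    rw [ContinuousLinearEquiv.coe_refl, ← hid]
    exact hfd
  set g := hcf.localInverse hfd' hkn with hg
  have hstrict : HasStrictFDerivAt f
      ((ContinuousLinearEquiv.refl ℝ (EuclideanSpace ℝ (Fin m)) :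
        EuclideanSpace ℝ (Fin m) ≃L[ℝ] EuclideanSpace ℝ (Fin m)) :
        EuclideanSpace ℝ (Fin m) →L[ℝ] EuclideanSpace ℝ (Fin m)) y₀ :=
    hcf.hasStrictFDerivAt' hfd' hkn
  have hgf : ∀ᶠ y in nhds y₀, g (f y) = y := hstrict.eventually_left_inverse
  have hfg : ∀ᶠ x in nhds (f y₀), f (g x) = x := hstrict.eventually_right_inverse
  have hgx₀ : g (f y₀) = y₀ := hstrict.localInverse_apply_image
  have hgcont : ContinuousAt g (f y₀) := hstrict.localInverse_continuousAt
  have hgck : ContDiffAt ℝ k g (f y₀) := hcf.to_localInverse hfd' hkn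
  obtain ⟨O, hO, hO_open, hy₀O⟩ := eventually_nhds_iff.mp
    (hgf.and (hp.isOpen_V.mem_nhds hy₀V : ∀ᶠ y in nhds y₀, y ∈ V))
  obtain ⟨W₀, hW₀n, hgW₀⟩ := hgck.contDiffOn le_rfl (by simp)
  have hgO : ∀ᶠ x in nhds (f y₀), g x ∈ O :=
    hgcont.preimage_mem_nhds (hO_open.mem_nhds (by rwa [hgx₀]))
  obtain ⟨W, hW, hWopen, hx₀W⟩ := eventually_nhds_iff.mp
    ((hfg.and hgO).and (hW₀n : ∀ᶠ x in nhds (f y₀), x ∈ W₀))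
  set Γ : EuclideanSpace ℝ (Fin m) → H := fun x => φ (g x) with hΓ
  set O₁ : Set (EuclideanSpace ℝ (Fin m)) := O ∩ f ⁻¹' W with hO₁
  have hO₁V : O₁ ⊆ V := fun y hy => (hO y hy.1).2
  have hfc : ContinuousOn f O := by
    apply π.continuous.comp_continuousOn
    exact hp.contDiffOn.continuousOn.mono (fun y hy => (hO y hy).2)
  have hO₁open : IsOpen O₁ := hfc.isOpen_inter_preimage hO_open hWopen
  have hgW : g '' W = O₁ := by
    apply subset_antisymm
    · rintro _ ⟨x, hxW, rfl⟩
      obtain ⟨⟨hfgx, hgxO⟩, _⟩ := hW x hxW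
      exact ⟨hgxO, by simp only [mem_preimage]; rw [hfgx]; exact hxW⟩
    · rintro y ⟨hyO, hyW⟩
      exact ⟨f y, hyW, (hO y hyO).1⟩
  have himg : Γ '' W = φ '' O₁ := by
    rw [← hgW, Set.image_image]
  obtain ⟨U₁, hU₁open, hφO₁⟩ := hp.image_open hO₁open hO₁V
  have hmaps : Set.MapsTo g W V := fun x hx => (hO (g x) (hW x hx).1.2).2
  refine ⟨Γ, π, W, U₁, f y₀, ?_, hx₀W, ?_⟩
  · refine ⟨hWopen, hU₁open, ?_, ?_, ?_⟩
    · exact hp.contDiffOn.comp (hgW₀.mono (fun x hx => (hW x hx).2)) hmaps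
    · rw [himg, hφO₁]
    · intro x hx
      have : π (Γ x) = f (g x) := rfl
      rw [this, (hW x hx).1.1]
  · show φ (g (f y₀)) = h₀
    rw [hgx₀, hφy₀]

end Aux2

section Aux3

variable {H : Type*} [NormedAddCommGroup H] [NormedSpace ℝ H]

theorem const_of_hasDerivAt_zero {c : ℝ → H} {t : ℝ}
    (h : ∀ s ∈ Set.uIcc (0:ℝ) t, HasDerivAt c 0 s) : c t = c 0 := by
  have key : ∀ (d : ℝ → H) (r : ℝ), 0 ≤ r → (∀ s ∈ Set.Icc (0:ℝ) r, HasDerivAt d 0 s) →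
      d r = d 0 := by
    intro d r hr hd
    have hcont : ContinuousOn d (Set.Icc 0 r) :=
      fun s hs => ((hd s hs).continuousAt).continuousWithinAt
    have hderiv : ∀ s ∈ Set.Ico (0:ℝ) r, HasDerivWithinAt d 0 (Set.Ici s) s :=
      fun s hs => ((hd s ⟨hs.1, hs.2.le⟩).hasDerivWithinAt)
    exact constant_of_has_deriv_right_zero hcont hderiv r (Set.right_mem_Icc.2 hr)
  rcases le_total 0 t with ht | ht
  · exact key c t ht (fun s hs => h s (by rwa [Set.uIcc_of_le ht]))
  · have h2 : ∀ s ∈ Set.Icc (0:ℝ) (-t), HasDerivAt (fun s => c (-s)) 0 s := by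
      intro s hs
      have h1 : HasDerivAt c 0 (-s) := h (-s) (by
        rw [Set.uIcc_of_ge ht]
        constructor
        · linarith [hs.2]
        · linarith [hs.1])
      have := h1.scomp s (hasDerivAt_neg s)
      rw [smul_zero] at this
      exact this
    have := key (fun s => c (-s)) (-t) (by linarith) h2
    simpa using this

theorem GraphChart.leaf {k m : ℕ} {M : Set H} {Γ : EuclideanSpace ℝ (Fin m) → H}
    {π : H →L[ℝ] EuclideanSpace ℝ (Fin m)} {W : Set (EuclideanSpace ℝ (Fin m))} {U : Set H}
    (gc : GraphChart k m M Γ π W U) (hk : 1 ≤ k) {v : H}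
    (hv : ∀ x ∈ W, fderiv ℝ Γ x (π v) = v) {x : EuclideanSpace ℝ (Fin m)} {t : ℝ}
    (hseg : ∀ s ∈ Set.uIcc (0:ℝ) t, x + s • π v ∈ W) :
    Γ (x + t • π v) = Γ x + t • v := by
  set c : ℝ → H := fun s => Γ (x + s • π v) - s • v with hc
  have hder : ∀ s ∈ Set.uIcc (0:ℝ) t, HasDerivAt c 0 s := by
    intro s hs
    have hxs : x + s • π v ∈ W := hseg s hs
    have hΓd := gc.hasFDerivAt hk hxs
    have hα : HasDerivAt (fun s : ℝ => x + s • π v) (π v) s := by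
      simpa using ((hasDerivAt_id s).smul_const (π v)).const_add x
    have h2 : HasDerivAt (fun s : ℝ => Γ (x + s • π v))
        (fderiv ℝ Γ (x + s • π v) (π v)) s := hΓd.comp_hasDerivAt s hα
    have h3 : HasDerivAt (fun s : ℝ => s • v) v s := by
      simpa using (hasDerivAt_id s).smul_const v
    have h4 := h2.sub h3
    rw [hv _ hxs] at h4
    rw [sub_self] at h4
    exact h4
  have hconst := const_of_hasDerivAt_zero hder
  have : Γ (x + t • π v) - t • v = Γ (x + (0:ℝ) • π v) - (0:ℝ) • v := hconst
  rw [zero_smul, zero_smul, add_zero, sub_zero] at this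
  rw [sub_eq_iff_eq_add] at this
  exact this

end Aux3

section Aux4

variable {H : Type*} [NormedAddCommGroup H] [InnerProductSpace ℝ H]

/-- Global invariance: if `v` is tangent to the closed submanifold `M` at every point,
then translation by `v` maps `M` into itself. -/
theorem IsSubmanifold.add_mem {k m : ℕ} (hk : 1 ≤ k) {M : Set H} (hM : IsSubmanifold k m M)
    (hMc : IsClosed M) {v : H} (htv : ∀ h ∈ M, v ∈ TangentSet k m M h) :
    ∀ h ∈ M, h + v ∈ M := by
  intro h hh
  set S := {t : ℝ | h + t • v ∈ M} with hS
  have h0 : (0:ℝ) ∈ S := by simp [hS, hh]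
  have hSclosed : IsClosed S := hMc.preimage (by fun_prop)
  have hSopen : IsOpen S := by
    rw [Metric.isOpen_iff]
    intro t ht
    obtain ⟨Γ, π, W, U, x₀, gc, hx₀W, hΓx₀⟩ := exists_graphChart hk hM ht
    have hv : ∀ x ∈ W, fderiv ℝ Γ x (π v) = v :=
      fun x hx => gc.tangent_eq hk hx (htv (Γ x) (gc.mem_M hx))
    have hcont : ContinuousAt (fun s : ℝ => x₀ + s • π v) 0 := by fun_prop
    have hn : {s : ℝ | x₀ + s • π v ∈ W} ∈ nhds 0 :=
      hcont.preimage_mem_nhds (gc.isOpen_W.mem_nhds (by simpa using hx₀W))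
    obtain ⟨ε, hε, hball⟩ := Metric.mem_nhds_iff.mp hn
    refine ⟨ε, hε, ?_⟩
    intro s hs
    have hd : |s - t| < ε := by simpa [Real.dist_eq] using hs
    have hseg : ∀ r ∈ Set.uIcc (0:ℝ) (s - t), x₀ + r • π v ∈ W := by
      intro r hr
      apply hball
      have h1 : |r| ≤ |s - t| := by
        rcases le_total 0 (s - t) with hst | hst
        · rw [Set.uIcc_of_le hst] at hr
          rw [abs_of_nonneg hr.1, abs_of_nonneg hst]; exact hr.2
        · rw [Set.uIcc_of_ge hst] at hr
          rw [abs_of_nonpos hr.2, abs_of_nonpos hst]; linarith [hr.1]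
      simpa [Real.dist_eq] using lt_of_le_of_lt h1 hd
    have key := gc.leaf hk hv hseg
    have hmem : Γ (x₀ + (s - t) • π v) ∈ M := gc.mem_M (hseg (s - t) Set.right_mem_uIcc)
    rw [key, hΓx₀] at hmem
    show h + s • v ∈ M
    have heq : h + s • v = h + t • v + (s - t) • v := by module
    rwa [heq]
  have huniv : S = Set.univ := IsClopen.eq_univ ⟨hSclosed, hSopen⟩ ⟨0, h0⟩
  have h1 : (1:ℝ) ∈ S := huniv ▸ Set.mem_univ (1:ℝ)
  simpa [hS] using h1

end Aux4

set_option maxHeartbeats 1000000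

/-- if `M` is closed, `dim L = m - 1` and `L ⊆ T_h M` for all `h ∈ M`,
then `M` is a foliation generated by `L`. -/
theorem stmt10 {H : Type*} [NormedAddCommGroup H] [InnerProductSpace ℝ H] [CompleteSpace H]
    (k m : ℕ) (hk : 1 ≤ k) (hm : 2 ≤ m) (M : Set H) (hM : IsSubmanifold k m M)
    (hMclosed : IsClosed M)
    (L : Submodule ℝ H) [FiniteDimensional ℝ L] (hdim : Module.finrank ℝ L = m - 1)
    (htang : ∀ h ∈ M, (L : Set H) ⊆ TangentSet k m M h) :
    ∃ N : Set Lᗮ, IsSubmanifold k 1 N ∧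
      M = (Subtype.val '' N : Set H) + (L : Set H) := by
  classical
  haveI : CompleteSpace L := FiniteDimensional.complete ℝ L
  set P : H →L[ℝ] Lᗮ := Submodule.orthogonalProjectionOnto Lᗮ with hPdef
  have hLL : Lᗮᗮ = L := Submodule.orthogonal_orthogonal L
  have hsub : ∀ z : H, z - ↑(P z) ∈ L := by
    intro z
    have := Submodule.sub_starProjection_mem_orthogonal (K := Lᗮ) z
    rwa [hLL] at this
  have hinv : ∀ h ∈ M, ∀ v ∈ L, h + v ∈ M := by
    intro h hh v hvL
    exact IsSubmanifold.add_mem hk hM hMclosed (fun h' hh' => htang h' hh' hvL) h hh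
  have hPmem : ∀ z ∈ M, (↑(P z) : H) ∈ M := by
    intro z hz
    have h1 : z + -(z - ↑(P z)) ∈ M := hinv z hz _ (neg_mem (hsub z))
    have h2 : z + -(z - ↑(P z)) = ↑(P z) := by abel
    rwa [h2] at h1
  set N : Set Lᗮ := Subtype.val ⁻¹' M with hNdef
  have hMN : M = (Subtype.val '' N : Set H) + (L : Set H) := by
    ext z
    constructor
    · intro hz
      rw [Set.mem_add]
      exact ⟨↑(P z), ⟨P z, hPmem z hz, rfl⟩, z - ↑(P z), hsub z, by abel⟩
    · rw [Set.mem_add]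
      rintro ⟨-, ⟨nn, hnn, rfl⟩, l, hl, rfl⟩
      exact hinv _ hnn l hl
  refine ⟨N, ⟨?_, ?_⟩, hMN⟩
  · obtain ⟨z, hz⟩ := hM.1
    exact ⟨P z, hPmem z hz⟩
  -- charts for N
  intro n hn
  have hhM : (↑n : H) ∈ M := hn
  obtain ⟨Γ, π, W, U, x₀, gc, hx₀W, hΓx₀⟩ := exists_graphChart hk hM hhM
  have hsec : ∀ x ∈ W, ∀ v ∈ L, fderiv ℝ Γ x (π v) = v :=
    fun x hx v hv => gc.tangent_eq hk hx (htang (Γ x) (gc.mem_M hx) hv)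
  -- the subspace K = π(L) and a complement direction e
  set f : L →ₗ[ℝ] EuclideanSpace ℝ (Fin m) :=
    (π : H →ₗ[ℝ] EuclideanSpace ℝ (Fin m)).comp L.subtype with hfdef
  have hfapp : ∀ l : L, f l = π (↑l : H) := fun l => rfl
  have hfinj : Function.Injective f := by
    have h0 : ∀ l : L, f l = 0 → l = 0 := by
      intro l hl
      have h1 := hsec x₀ hx₀W ↑l l.2
      rw [← hfapp, hl, map_zero] at h1
      exact Subtype.ext (by simpa using h1.symm)
    intro a b hab
    have := h0 (a - b) (by rw [map_sub, hab, sub_self])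
    rwa [sub_eq_zero] at this
  set K : Submodule ℝ (EuclideanSpace ℝ (Fin m)) := LinearMap.range f with hKdef
  have hKrank : Module.finrank ℝ K = m - 1 := by
    rw [hKdef, LinearMap.finrank_range_of_inj hfinj, hdim]
  have hKne : K ≠ ⊤ := by
    intro hcon
    rw [hcon, finrank_top, finrank_euclideanSpace_fin] at hKrank
    omega
  obtain ⟨e, heK⟩ : ∃ e, e ∉ K := by
    by_contra hcon
    push_neg at hcon
    exact hKne (Submodule.eq_top_iff'.2 hcon)
  set θ : (L × ℝ) →ₗ[ℝ] EuclideanSpace ℝ (Fin m) :=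
    LinearMap.coprod f (LinearMap.toSpanSingleton ℝ _ e) with hθdef
  have hθapp : ∀ p : L × ℝ, θ p = f p.1 + p.2 • e := by
    intro p
    simp [hθdef, LinearMap.toSpanSingleton_apply]
  have hθinj : Function.Injective θ := by
    have h0 : ∀ p : L × ℝ, θ p = 0 → p = 0 := by
      rintro ⟨l, t⟩ hp
      rw [hθapp] at hp
      have hte : t • e = -(f l) := by
        rw [add_comm] at hp
        exact add_eq_zero_iff_eq_neg.1 hp
      have ht : t = 0 := by
        by_contra htne
        apply heK
        have he : e = t⁻¹ • (-(f l)) := by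
          rw [← hte, smul_smul, inv_mul_cancel₀ htne, one_smul]
        rw [he]
        exact K.smul_mem _ (K.neg_mem (LinearMap.mem_range_self f l))
      have hl : f l = 0 := by
        rw [ht, zero_smul, add_zero] at hp
        exact hp
      have hl0 : l = 0 := hfinj (by rw [hl, map_zero])
      simp [hl0, ht, Prod.ext_iff]
    intro a b hab
    have := h0 (a - b) (by rw [map_sub, hab, sub_self])
    rwa [sub_eq_zero] at this
  have hrank : Module.finrank ℝ (L × ℝ) = Module.finrank ℝ (EuclideanSpace ℝ (Fin m)) := by
    rw [Module.finrank_prod, hdim, Module.finrank_self, finrank_euclideanSpace_fin]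
    omega
  set θe : (L × ℝ) ≃ₗ[ℝ] EuclideanSpace ℝ (Fin m) :=
    θ.linearEquivOfInjective hθinj hrank with hθedef
  set θc : (L × ℝ) ≃L[ℝ] EuclideanSpace ℝ (Fin m) := θe.toContinuousLinearEquiv with hθcdef
  have hθcapp : ∀ p : L × ℝ, θc p = π (↑p.1 : H) + p.2 • e := by
    intro p
    have h1 : θc p = θe p := rfl
    rw [h1, hθedef, LinearMap.linearEquivOfInjective_apply, hθapp, hfapp]
  set lmap : EuclideanSpace ℝ (Fin m) → L := fun x => (θc.symm x).1 with hlmdef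
  set tmap : EuclideanSpace ℝ (Fin m) → ℝ := fun x => (θc.symm x).2 with htmdef
  have hdecomp : ∀ x, π (↑(lmap x) : H) + (tmap x) • e = x := by
    intro x
    have := hθcapp (θc.symm x)
    rw [θc.apply_symm_apply] at this
    exact this.symm
  have hlcont : Continuous lmap := continuous_fst.comp θc.symm.continuous
  have htcont : Continuous tmap := continuous_snd.comp θc.symm.continuous
  -- crossing between leaves
  have hcross : ∀ x ∈ W, ∀ v : H, v ∈ L → Γ x + v ∈ U →
      x + π v ∈ W ∧ Γ (x + π v) = Γ x + v := by
    intro x hx v hvL hU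
    have hM1 : Γ x + v ∈ M := hinv _ (gc.mem_M hx) v hvL
    have : Γ x + v ∈ Γ '' W := by rw [gc.image_eq]; exact ⟨hU, hM1⟩
    obtain ⟨x', hx'W, hx'⟩ := this
    have hπ' : x' = x + π v := by
      rw [← gc.proj_eq x' hx'W, hx', map_add, gc.proj_eq x hx]
    refine ⟨hπ' ▸ hx'W, hπ' ▸ hx'⟩
  -- radius δ along the direction e
  have hδcont : ContinuousAt (fun t : ℝ => x₀ + t • e) 0 := by fun_prop
  have hδn : {t : ℝ | x₀ + t • e ∈ W} ∈ nhds 0 :=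
    hδcont.preimage_mem_nhds (gc.isOpen_W.mem_nhds (by simpa using hx₀W))
  obtain ⟨δ, hδpos, hδ⟩ := Metric.mem_nhds_iff.mp hδn
  have hδW : ∀ t : ℝ, |t| < δ → x₀ + t • e ∈ W := by
    intro t htd
    exact hδ (by simpa [Real.dist_eq] using htd)
  -- the good relatively open piece B
  set q : EuclideanSpace ℝ (Fin m) → H := fun x => Γ x - ↑(lmap (x - x₀)) with hqdef
  have hqcont : ContinuousOn q W := by
    apply ContinuousOn.sub gc.contDiffOn.continuousOn
    apply Continuous.continuousOn
    exact continuous_subtype_val.comp (hlcont.comp (continuous_id.sub continuous_const))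
  set B : Set (EuclideanSpace ℝ (Fin m)) :=
    (W ∩ q ⁻¹' U) ∩ {x | |tmap (x - x₀)| < δ} with hBdef
  have hBopen : IsOpen B := by
    apply IsOpen.inter (hqcont.isOpen_inter_preimage gc.isOpen_W gc.isOpen_U)
    have hc2 : Continuous fun x => |tmap (x - x₀)| :=
      continuous_abs.comp (htcont.comp (continuous_id.sub continuous_const))
    exact isOpen_lt hc2 continuous_const
  have hl0 : lmap 0 = 0 := by rw [hlmdef]; simp
  have ht0 : tmap 0 = 0 := by rw [htmdef]; simp
  have hx₀B : x₀ ∈ B := by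
    refine ⟨⟨hx₀W, ?_⟩, ?_⟩
    · show q x₀ ∈ U
      rw [hqdef]
      simp only [sub_self, hl0]
      simpa using gc.mem_U hx₀W
    · show |tmap (x₀ - x₀)| < δ
      rw [sub_self, ht0]
      simpa using hδpos
  set U₂ : Set H := U ∩ π ⁻¹' B with hU₂def
  have hU₂open : IsOpen U₂ := gc.isOpen_U.inter (π.continuous.isOpen_preimage _ hBopen)
  have hnU₂ : (↑n : H) ∈ U₂ := by
    rw [← hΓx₀]
    exact ⟨gc.mem_U hx₀W, by simp only [Set.mem_preimage]; rw [gc.proj_eq x₀ hx₀W]; exact hx₀B⟩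
  have hU₂M : U₂ ∩ M = Γ '' B := by
    apply subset_antisymm
    · rintro z ⟨⟨hzU, hzB⟩, hzM⟩
      have : z ∈ Γ '' W := by rw [gc.image_eq]; exact ⟨hzU, hzM⟩
      obtain ⟨x, hxW, rfl⟩ := this
      have : π (Γ x) = x := gc.proj_eq x hxW
      rw [Set.mem_preimage, this] at hzB
      exact ⟨x, hzB, rfl⟩
    · rintro - ⟨x, hxB, rfl⟩
      have hxW : x ∈ W := hxB.1.1
      refine ⟨⟨gc.mem_U hxW, ?_⟩, gc.mem_M hxW⟩
      rw [Set.mem_preimage, gc.proj_eq x hxW]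
      exact hxB
  -- the 1-dimensional chart
  set c : EuclideanSpace ℝ (Fin 1) → Lᗮ := fun s => P (Γ (x₀ + (s 0) • e)) with hcdef
  have hproj : Continuous fun s : EuclideanSpace ℝ (Fin 1) => s 0 :=
    (EuclideanSpace.proj (0 : Fin 1)).continuous
  set A₁ : Set (EuclideanSpace ℝ (Fin 1)) := {s | |s 0| < δ} with hA₁def
  have hA₁open : IsOpen A₁ := isOpen_lt (continuous_abs.comp hproj) continuous_const
  have hcW : ∀ s ∈ A₁, x₀ + (s 0) • e ∈ W := fun s hs => hδW _ hs
  have hcM : ∀ s ∈ A₁, (↑(c s) : H) ∈ M := fun s hs => hPmem _ (gc.mem_M (hcW s hs))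
  have hαcont : Continuous fun s : EuclideanSpace ℝ (Fin 1) => x₀ + (s 0) • e :=
    continuous_const.add (hproj.smul continuous_const)
  have hccont : ContinuousOn (fun s => (↑(c s) : H)) A₁ := by
    apply (continuous_subtype_val.comp P.continuous).comp_continuousOn
    exact gc.contDiffOn.continuousOn.comp hαcont.continuousOn hcW
  set V₁ : Set (EuclideanSpace ℝ (Fin 1)) := A₁ ∩ (fun s => (↑(c s) : H)) ⁻¹' U₂ with hV₁def
  have hV₁open : IsOpen V₁ := hccont.isOpen_inter_preimage hA₁open hU₂open
  set U₁ : Set Lᗮ := Subtype.val ⁻¹' U₂ with hU₁def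
  have hU₁open : IsOpen U₁ := hU₂open.preimage continuous_subtype_val
  have hPL : ∀ v : H, v ∈ L → P v = 0 := by
    intro v hv
    apply Submodule.orthogonalProjectionOnto_apply_of_mem_orthogonal
    rw [hLL]
    exact hv
  have hPLperp : ∀ z : Lᗮ, P (↑z : H) = z :=
    fun z => Submodule.orthogonalProjectionOnto_mem_subspace_eq_self z
  -- image equality
  have himage : c '' V₁ = U₁ ∩ N := by
    apply subset_antisymm
    · rintro - ⟨s, hs, rfl⟩
      exact ⟨hs.2, hcM s hs.1⟩
    · rintro z ⟨hzU₁, hzN⟩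
      have hz2 : (↑z : H) ∈ U₂ ∩ M := ⟨hzU₁, hzN⟩
      rw [hU₂M] at hz2
      obtain ⟨x, hxB, hΓx⟩ := hz2
      have hxW : x ∈ W := hxB.1.1
      set w := x - x₀ with hwdef
      set l := lmap w with hldef
      set t := tmap w with htdef
      have hd : π (↑l : H) + t • e = w := hdecomp w
      have hqU : Γ x - ↑l ∈ U := hxB.1.2
      have htδ : |t| < δ := hxB.2
      obtain ⟨hmem2, heq2⟩ := hcross x hxW (-(↑l : H)) (neg_mem l.2)
        (by rw [← sub_eq_add_neg]; exact hqU)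
      have hx2 : x + π (-(↑l : H)) = x₀ + t • e := by
        rw [map_neg]
        have : (π (↑l : H)) = w - t • e := by rw [← hd]; abel
        rw [this, hwdef]
        abel
      rw [hx2] at heq2
      refine ⟨(WithLp.toLp 2 (fun _ => t) : EuclideanSpace ℝ (Fin 1)), ⟨?_, ?_⟩, ?_⟩
      · show |(WithLp.toLp 2 (fun _ => t) : EuclideanSpace ℝ (Fin 1)) 0| < δ
        exact htδ
      · show (↑(c (WithLp.toLp 2 (fun _ => t))) : H) ∈ U₂
        have hcz : c (WithLp.toLp 2 (fun _ => t)) = z := by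
          rw [hcdef]
          show P (Γ (x₀ + t • e)) = z
          rw [heq2, hΓx, ← sub_eq_add_neg, map_sub, hPL (↑l) l.2, hPLperp z, sub_zero]
        rw [hcz]
        exact hzU₁
      · show c (WithLp.toLp 2 (fun _ => t)) = z
        rw [hcdef]
        show P (Γ (x₀ + t • e)) = z
        rw [heq2, hΓx, ← sub_eq_add_neg, map_sub, hPL (↑l) l.2, hPLperp z, sub_zero]
  -- injectivity
  have hinjOn : Set.InjOn c V₁ := by
    intro s hs s' hs' hcc
    have haW : x₀ + (s 0) • e ∈ W := hcW s hs.1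
    have hbW : x₀ + (s' 0) • e ∈ W := hcW s' hs'.1
    set a := x₀ + (s 0) • e with hadef
    set b := x₀ + (s' 0) • e with hbdef
    set d : H := Γ a - Γ b with hddef
    have hPd : P d = 0 := by
      rw [hddef, map_sub]
      have : P (Γ a) = P (Γ b) := hcc
      rw [this, sub_self]
    have hdL : d ∈ L := by
      have := hsub d
      rwa [hPd, ZeroMemClass.coe_zero, sub_zero] at this
    obtain ⟨hm2, he2⟩ := hcross b hbW d hdL (by
      have : Γ b + d = Γ a := by rw [hddef]; abel
      rw [this]; exact gc.mem_U haW)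
    have hba : Γ (b + π d) = Γ a := by rw [he2, hddef]; abel
    have hba2 : b + π d = a := by
      rw [← gc.proj_eq (b + π d) hm2, hba, gc.proj_eq a haW]
    have hπd : π d = (s 0 - s' 0) • e := by
      have : π d = a - b := by rw [← hba2]; abel
      rw [this, hadef, hbdef]
      rw [sub_smul]
      abel
    have hπdK : π d ∈ K := by
      rw [hKdef]
      exact ⟨⟨d, hdL⟩, rfl⟩
    have hss : s 0 = s' 0 := by
      by_contra hne
      apply heK
      have hne2 : s 0 - s' 0 ≠ 0 := sub_ne_zero.2 hne
      have : e = (s 0 - s' 0)⁻¹ • π d := by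
        rw [hπd, smul_smul, inv_mul_cancel₀ hne2, one_smul]
      rw [this]
      exact K.smul_mem _ hπdK
    exact PiLp.ext fun i => by rw [Subsingleton.elim i (0 : Fin 1)]; exact hss
  -- continuous inverse
  set ψ : Lᗮ → EuclideanSpace ℝ (Fin 1) :=
    fun z => (WithLp.toLp 2 (fun _ => tmap (π (↑z : H) - x₀)) : EuclideanSpace ℝ (Fin 1)) with hψdef
  have hψcont : Continuous ψ := by
    have h1 : Continuous fun z : Lᗮ => tmap (π (↑z : H) - x₀) :=
      htcont.comp ((π.continuous.comp continuous_subtype_val).sub continuous_const)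
    have h2 : ψ = fun z : Lᗮ => (tmap (π (↑z : H) - x₀)) •
        (WithLp.toLp 2 (fun _ => (1:ℝ)) : EuclideanSpace ℝ (Fin 1)) := by
      funext z; ext i
      show tmap (π (↑z : H) - x₀) = tmap (π (↑z : H) - x₀) * 1
      rw [mul_one]
    rw [h2]
    exact h1.smul continuous_const
  have hψinv : ∀ s ∈ V₁, ψ (c s) = s := by
    intro s hs
    set a := x₀ + (s 0) • e with hadef
    have haW : a ∈ W := hcW s hs.1
    set la : H := Γ a - ↑(P (Γ a)) with hladef
    have hlaL : la ∈ L := hsub (Γ a)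
    have hval : (↑(c s) : H) = Γ a - la := by
      rw [hcdef, hladef]
      show (↑(P (Γ a)) : H) = Γ a - (Γ a - ↑(P (Γ a)))
      abel
    have harg : π (↑(c s) : H) - x₀ = π (↑((-⟨la, hlaL⟩ : L)) : H) + (s 0) • e := by
      rw [hval, map_sub]
      have : π (Γ a) = a := gc.proj_eq a haW
      rw [this, hadef]
      show x₀ + (s 0) • e - π la - x₀ = π (-la) + (s 0) • e
      rw [map_neg]
      abel
    have hbig : θc ((-⟨la, hlaL⟩ : L), s 0) = π (↑(c s) : H) - x₀ := by
      rw [hθcapp, harg]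
    have hsymm : θc.symm (π (↑(c s) : H) - x₀) = ((-⟨la, hlaL⟩ : L), s 0) := by
      rw [← hbig, θc.symm_apply_apply]
    have : tmap (π (↑(c s) : H) - x₀) = s 0 := by
      rw [htmdef]
      show (θc.symm (π (↑(c s) : H) - x₀)).2 = s 0
      rw [hsymm]
    rw [hψdef]
    exact PiLp.ext fun i => by rw [Subsingleton.elim i (0 : Fin 1)]; exact this
  -- derivative computations
  set E₁ : EuclideanSpace ℝ (Fin 1) →L[ℝ] EuclideanSpace ℝ (Fin m) :=
    (EuclideanSpace.proj (0 : Fin 1)).smulRight e with hE₁def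
  have hE₁app : ∀ u : EuclideanSpace ℝ (Fin 1), E₁ u = (u 0) • e := by
    intro u
    rw [hE₁def, ContinuousLinearMap.smulRight_apply]
    congr 1
  have hαeq : (fun s : EuclideanSpace ℝ (Fin 1) => x₀ + (s 0) • e) =
      fun s => x₀ + E₁ s := by
    funext s
    rw [hE₁app]
  have hαcd : ContDiff ℝ k fun s : EuclideanSpace ℝ (Fin 1) => x₀ + (s 0) • e := by
    rw [hαeq]
    exact contDiff_const.add E₁.contDiff
  have hccd : ContDiffOn ℝ k c V₁ := by
    have h1 : ContDiffOn ℝ k (fun s : EuclideanSpace ℝ (Fin 1) => Γ (x₀ + (s 0) • e)) A₁ :=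
      gc.contDiffOn.comp hαcd.contDiffOn hcW
    exact (P.contDiff.comp_contDiffOn h1).mono (Set.inter_subset_left)
  have hfderiv_inj : ∀ s ∈ V₁, Function.Injective (fderiv ℝ c s) := by
    intro s hs
    set a := x₀ + (s 0) • e with hadef
    have haW : a ∈ W := hcW s hs.1
    have hα : HasFDerivAt (fun s : EuclideanSpace ℝ (Fin 1) => x₀ + (s 0) • e) E₁ s := by
      rw [hαeq]
      exact E₁.hasFDerivAt.const_add x₀
    have hΓa := gc.hasFDerivAt hk haW
    have hcd : HasFDerivAt c ((P.comp (fderiv ℝ Γ a)).comp E₁) s := by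
      have h1 : HasFDerivAt (fun s : EuclideanSpace ℝ (Fin 1) => Γ (x₀ + (s 0) • e))
          ((fderiv ℝ Γ a).comp E₁) s := hΓa.comp s hα
      exact P.hasFDerivAt.comp s h1
    have hfc : fderiv ℝ c s = (P.comp (fderiv ℝ Γ a)).comp E₁ := hcd.fderiv
    have hPne : P (fderiv ℝ Γ a e) ≠ 0 := by
      intro hcon
      apply heK
      set d : H := fderiv ℝ Γ a e with hd2
      have hdL : d ∈ L := by
        have := hsub d
        rwa [hd2, hcon, ZeroMemClass.coe_zero, sub_zero] at this
      have hπd : π d = e := gc.proj_fderiv hk haW e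
      rw [← hπd]
      exact ⟨⟨d, hdL⟩, rfl⟩
    intro u u' huu
    rw [hfc] at huu
    have happ : ∀ w : EuclideanSpace ℝ (Fin 1),
        ((P.comp (fderiv ℝ Γ a)).comp E₁) w = (w 0) • P (fderiv ℝ Γ a e) := by
      intro w
      rw [ContinuousLinearMap.comp_apply, ContinuousLinearMap.comp_apply, hE₁app,
        map_smul, map_smul]
    rw [happ, happ] at huu
    have h0 : u 0 = u' 0 := by
      by_contra hne
      have : (u 0 - u' 0) • P (fderiv ℝ Γ a e) = 0 := by
        rw [sub_smul, huu, sub_self]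
      rcases smul_eq_zero.1 this with h | h
      · exact hne (sub_eq_zero.1 h)
      · exact hPne h
    exact PiLp.ext fun i => by rw [Subsingleton.elim i (0 : Fin 1)]; exact h0
  exact ⟨V₁, c, U₁, hU₁open, hnU₂, hV₁open, hccd, himage, hinjOn,
    ⟨ψ, hψcont.continuousOn, hψinv⟩, hfderiv_inj⟩
end
end
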